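/- arXiv:1508.05639 — 7 statements merged into one kernel-verified Lean document; each statement's English description precedes it below -/
import Mathlib

section
/- (Three Lattice Theorem) For every dyadic lattice D in ℝⁿ, there exist 3ⁿ dyadic lattices D⁽¹⁾, ..., D⁽³ⁿ⁾ such that the family of triple cubes {x(Q) + 3(Q − x(Q)) : Q ∈ D} equals the union ⋃_{j=1}^{3ⁿ} D⁽ʲ⁾, and moreover for every cube Q ∈ D and every j ∈ {1,...,3ⁿ} there is a unique cube R ∈ D⁽ʲ⁾ with sidelength 3ℓ_Q containing Q. -/
open MeasureTheory Set
open scoped ENNReal Classical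

structure Cube (n : ℕ) where
  corner : Fin n → ℝ
  side : ℝ
  side_pos : 0 < side

namespace Cube

def toSet {n : ℕ} (Q : Cube n) : Set (Fin n → ℝ) :=
  {y | ∀ i, Q.corner i ≤ y i ∧ y i < Q.corner i + Q.side}

/-- `Q'` is one of the `2^n` dyadic children of `Q`. -/
def IsChild {n : ℕ} (Q' Q : Cube n) : Prop :=
  Q'.side = Q.side / 2 ∧ ∃ ε : Fin n → Bool,
    Q'.corner = fun i => Q.corner i + (if ε i then Q.side / 2 else 0)

/-- `Q' ∈ 𝒟(Q)`: `Q'` is obtained from `Q` by iteratively taking dyadic children. -/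
def IsDescendant {n : ℕ} (Q' Q : Cube n) : Prop :=
  Relation.ReflTransGen IsChild Q' Q

end Cube

/-- The three dyadic lattice axioms (DL-1), (DL-2), (DL-3). -/
def IsDyadicLattice {n : ℕ} (D : Set (Cube n)) : Prop :=
  (∀ Q ∈ D, ∀ Q' : Cube n, Q'.IsChild Q → Q' ∈ D) ∧
  (∀ Q ∈ D, ∀ Q' ∈ D, ∃ P ∈ D, Q.IsDescendant P ∧ Q'.IsDescendant P) ∧
  (∀ K : Set (Fin n → ℝ), IsCompact K → ∃ Q ∈ D, K ⊆ Q.toSet)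

/-- `S` is a `Λ`-Carleson family relative to the lattice `D`. -/
def IsCarleson {n : ℕ} (Λ : ℝ) (D S : Set (Cube n)) : Prop :=
  ∀ Q ∈ D, (∑' P : {P : Cube n // P ∈ S ∧ P.toSet ⊆ Q.toSet}, volume P.1.toSet)
    ≤ ENNReal.ofReal Λ * volume Q.toSet

/-- `S` is an `η`-sparse family. -/
def IsSparse {n : ℕ} (η : ℝ) (S : Set (Cube n)) : Prop :=
  ∃ E : Cube n → Set (Fin n → ℝ),
    (∀ Q ∈ S, E Q ⊆ Q.toSet ∧ MeasurableSet (E Q) ∧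
      ENNReal.ofReal η * volume Q.toSet ≤ volume (E Q)) ∧
    S.PairwiseDisjoint E

/-- The triple `x(Q) + 3(Q - x(Q))` of a cube: same corner, three times the sidelength. -/
def Cube.triple {n : ℕ} (Q : Cube n) : Cube n :=
  ⟨Q.corner, 3 * Q.side, by have := Q.side_pos; linarith⟩

namespace ThreeLattice

variable {n : ℕ}

theorem cube_eq {Q R : Cube n} (hc : Q.corner = R.corner) (hs : Q.side = R.side) : Q = R := by
  cases Q; cases R; simp_all

theorem corner_mem (Q : Cube n) : Q.corner ∈ Q.toSet :=
  fun i => ⟨le_refl _, by have := Q.side_pos; linarith⟩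

theorem child_subset {Q' Q : Cube n} (h : Q'.IsChild Q) : Q'.toSet ⊆ Q.toSet := by
  obtain ⟨hs, ε, hc⟩ := h
  intro y hy i
  have := hy i
  rw [hc, hs] at this
  have hside := Q.side_pos
  constructor
  · rcases le_or_gt (Q.corner i) (y i) with h | h
    · exact h
    · exfalso; rcases this with ⟨h1, _⟩
      by_cases hε : ε i <;> simp [hε] at h1 <;> linarith
  · rcases this with ⟨_, h2⟩
    by_cases hε : ε i <;> simp [hε] at h2 <;> linarith

theorem desc_subset {Q' Q : Cube n} (h : Q'.IsDescendant Q) : Q'.toSet ⊆ Q.toSet := by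
  induction h with
  | refl => exact subset_rfl
  | tail _ hbc ih => exact ih.trans (child_subset hbc)

theorem desc_struct {Q P : Cube n} (h : Q.IsDescendant P) :
    (∃ d : ℕ, Q.side * 2 ^ d = P.side) ∧
      ∃ k : Fin n → ℤ, ∀ i, Q.corner i = P.corner i + Q.side * k i := by
  induction h with
  | refl => exact ⟨⟨0, by ring⟩, 0, fun i => by simp⟩
  | @tail b c hab hbc ih =>
    obtain ⟨⟨d, hd⟩, k, hk⟩ := ih
    obtain ⟨hs, ε, hc⟩ := hbc
    have hcs : c.side = Q.side * 2 ^ (d + 1) := by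
      have : b.side = c.side / 2 := hs
      rw [this] at hd; field_simp at hd
      rw [pow_succ]; linarith
      
    constructor
    · exact ⟨d + 1, hcs.symm⟩
    · refine ⟨fun i => k i + 2 ^ d * (if ε i then 1 else 0), fun i => ?_⟩
      have h1 := hk i
      rw [hc] at h1
      simp only at h1
      push_cast
      rw [h1, hcs]
      by_cases hε : ε i <;> simp [hε] <;> ring

theorem child_point {Q : Cube n} {x : Fin n → ℝ} (hx : x ∈ Q.toSet) :
    ∃ Q' : Cube n, Q'.IsChild Q ∧ x ∈ Q'.toSet := by
  classical
  have hside := Q.side_pos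
  refine ⟨⟨fun i => Q.corner i + (if Q.corner i + Q.side / 2 ≤ x i then Q.side / 2 else 0),
      Q.side / 2, by linarith⟩, ⟨rfl, fun i => decide (Q.corner i + Q.side / 2 ≤ x i), ?_⟩, ?_⟩
  · funext i
    by_cases h : Q.corner i + Q.side / 2 ≤ x i <;> simp [h]
  · intro i
    dsimp only
    obtain ⟨h1, h2⟩ := hx i
    by_cases h : Q.corner i + Q.side / 2 ≤ x i
    · rw [if_pos h]; exact ⟨by linarith, by linarith⟩
    · rw [if_neg h]; push_neg at h; exact ⟨by linarith, by linarith⟩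

theorem subset_triple (Q : Cube n) : Q.toSet ⊆ Q.triple.toSet := by
  intro y hy i
  obtain ⟨h1, h2⟩ := hy i
  have := Q.side_pos
  exact ⟨h1, by simp only [Cube.triple]; linarith⟩

theorem cube_compact_closure (Q : Cube n) : IsCompact (closure Q.toSet) := by
  have hb : Q.toSet ⊆ Metric.closedBall Q.corner Q.side := by
    intro y hy
    rw [Metric.mem_closedBall, dist_pi_le_iff Q.side_pos.le]
    intro i
    obtain ⟨h1, h2⟩ := hy i
    rw [Real.dist_eq, abs_le]
    constructor <;> linarith
  exact (isCompact_closedBall _ _).of_isClosed_subset isClosed_closure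
    (closure_minimal hb Metric.isClosed_closedBall)

section Sig

variable {X : Type*} [AddCommGroup X]

def sigAuxP (u : ℤ → X) (v : X) : ℕ → X
  | 0 => v
  | (k+1) => u k - sigAuxP u v k

def sigAuxN (u : ℤ → X) (v : X) : ℕ → X
  | 0 => v
  | (k+1) => u (Int.negSucc k) - sigAuxN u v k

def sig (u : ℤ → X) (v : X) : ℤ → X
  | .ofNat k => sigAuxP u v k
  | .negSucc k => sigAuxN u v (k+1)

theorem sig_zero (u : ℤ → X) (v : X) : sig u v 0 = v := rfl

theorem sig_rec (u : ℤ → X) (v : X) (m : ℤ) : sig u v (m + 1) + sig u v m = u m := by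
  cases m with
  | ofNat k =>
    have : (Int.ofNat k) + 1 = Int.ofNat (k+1) := rfl
    rw [this]
    show sigAuxP u v (k+1) + sigAuxP u v k = u (Int.ofNat k)
    rw [sigAuxP]
    show u ↑k - sigAuxP u v k + sigAuxP u v k = u (Int.ofNat k)
    rw [Int.ofNat_eq_natCast]; abel
  | negSucc k =>
    cases k with
    | zero =>
      show sigAuxP u v 0 + sigAuxN u v 1 = u (Int.negSucc 0)
      rw [sigAuxP, sigAuxN, sigAuxN]; abel
    | succ k =>
      have : (Int.negSucc (k+1)) + 1 = Int.negSucc k := rfl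
      rw [this]
      show sigAuxN u v (k+1) + sigAuxN u v (k+1+1) = u (Int.negSucc (k+1))
      rw [show sigAuxN u v (k+1+1) = u (Int.negSucc (k+1)) - sigAuxN u v (k+1) from rfl]
      abel

theorem sig_rec' (u : ℤ → X) (v : X) (m : ℤ) : sig u v m = u m - sig u v (m + 1) :=
  eq_sub_of_add_eq' (sig_rec u v m)

theorem sig_surj (u : ℤ → X) (m : ℤ) : ∀ x : X, ∃ v, sig u v m = x := by
  induction m using Int.induction_on with
  | zero => exact fun x => ⟨x, rfl⟩
  | succ k ih =>
    intro x
    obtain ⟨v, hv⟩ := ih (u k - x)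
    refine ⟨v, ?_⟩
    have h := sig_rec u v k
    rw [hv] at h
    have := eq_sub_of_add_eq h
    simpa using this
  | pred k ih =>
    intro x
    obtain ⟨v, hv⟩ := ih (u (-k - 1) - x)
    refine ⟨v, ?_⟩
    have h := sig_rec u v (-k - 1)
    rw [show (-(k:ℤ) - 1 + 1) = -k from by ring, hv] at h
    have := eq_sub_of_add_eq' h
    simpa using this

end Sig

section Lattice

variable (D : Set (Cube n)) (hD : IsDyadicLattice D)
include hD

theorem D_nonempty : D.Nonempty := by
  obtain ⟨Q, hQ, -⟩ := hD.2.2 ∅ isCompact_empty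
  exact ⟨Q, hQ⟩

noncomputable def ell : ℝ := (D_nonempty D hD).choose.side

theorem ell_pos : 0 < ell D hD := (D_nonempty D hD).choose.side_pos

noncomputable def sc (m : ℤ) : ℝ := ell D hD * 2 ^ m

theorem sc_pos (m : ℤ) : 0 < sc D hD m :=
  mul_pos (ell_pos D hD) (zpow_pos two_pos m)

theorem sc_mono {m m' : ℤ} (h : m < m') : sc D hD m < sc D hD m' := by
  unfold sc
  have := ell_pos D hD
  rw [mul_lt_mul_iff_right₀ this]
  exact zpow_lt_zpow_right₀ one_lt_two h

theorem sc_lt {m m' : ℤ} (h : sc D hD m < sc D hD m') : m < m' := by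
  by_contra hc
  push_neg at hc
  rcases eq_or_lt_of_le hc with he | hlt
  · rw [he] at h; exact lt_irrefl _ h
  · exact absurd h (not_lt.mpr (le_of_lt (sc_mono D hD hlt)))

theorem sc_inj {m m' : ℤ} (h : sc D hD m = sc D hD m') : m = m' := by
  rcases lt_trichotomy m m' with hlt | he | hlt
  · exact absurd (sc_mono D hD hlt) (by rw [h]; exact lt_irrefl _)
  · exact he
  · exact absurd (sc_mono D hD hlt) (by rw [h]; exact lt_irrefl _)

theorem sc_double (m : ℤ) : sc D hD (m + 1) = 2 * sc D hD m := by
  unfold sc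
  rw [zpow_add₀ (two_ne_zero)]
  ring

theorem side_scale {Q : Cube n} (hQ : Q ∈ D) : ∃ m : ℤ, Q.side = sc D hD m := by
  obtain ⟨P, hP, h1, h2⟩ := hD.2.1 Q hQ _ (D_nonempty D hD).choose_spec
  obtain ⟨⟨a, ha⟩, -⟩ := desc_struct h1
  obtain ⟨⟨b, hb⟩, -⟩ := desc_struct h2
  refine ⟨(b : ℤ) - a, ?_⟩
  unfold sc ell
  rw [zpow_sub₀ (two_ne_zero), zpow_natCast, zpow_natCast]
  have h2pos : (0:ℝ) < 2 ^ a := by positivity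
  field_simp
  rw [ha, hb]

theorem descend {Q : Cube n} (hQ : Q ∈ D) {x : Fin n → ℝ} (hx : x ∈ Q.toSet) (d : ℕ) :
    ∃ Q' ∈ D, Q'.side * 2 ^ d = Q.side ∧ x ∈ Q'.toSet := by
  induction d with
  | zero => exact ⟨Q, hQ, by ring, hx⟩
  | succ d ih =>
    obtain ⟨Q', hQ', hside, hx'⟩ := ih
    obtain ⟨C, hC, hxC⟩ := child_point hx'
    refine ⟨C, hD.1 Q' hQ' C hC, ?_, hxC⟩
    rw [hC.1, pow_succ]
    field_simp
    linarith [hside]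

theorem same_scale_congr {Q Q' : Cube n} (hQ : Q ∈ D) (hQ' : Q' ∈ D) (hs : Q.side = Q'.side) :
    ∃ k : Fin n → ℤ, ∀ i, Q'.corner i = Q.corner i + Q.side * k i := by
  obtain ⟨P, hP, h1, h2⟩ := hD.2.1 Q hQ Q' hQ'
  obtain ⟨-, k1, hk1⟩ := desc_struct h1
  obtain ⟨-, k2, hk2⟩ := desc_struct h2
  refine ⟨fun i => k2 i - k1 i, fun i => ?_⟩
  have e1 := hk1 i
  have e2 := hk2 i
  rw [← hs] at e2
  push_cast
  rw [e2, e1]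
  ring

variable (hn : 0 < n)
include hn

theorem exists_big (r : ℝ) : ∃ P ∈ D, r < P.side := by
  set i0 : Fin n := ⟨0, hn⟩
  set x : Fin n → ℝ := fun _ => 0 with hx
  set y : Fin n → ℝ := fun _ => |r| + 1 with hy
  obtain ⟨P, hP, hK⟩ := hD.2.2 {x, y} (Set.Finite.isCompact (by simp))
  refine ⟨P, hP, ?_⟩
  have hx' := hK (Set.mem_insert _ _) i0
  have hy' := hK (Set.mem_insert_of_mem _ rfl) i0
  simp only [hx, hy] at hx' hy'
  have : |r| < P.side := by
    obtain ⟨h1, -⟩ := hx'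
    obtain ⟨-, h2⟩ := hy'
    linarith
  exact lt_of_le_of_lt (le_abs_self r) this

theorem exists_scale (m : ℤ) : ∃ Q ∈ D, Q.side = sc D hD m := by
  obtain ⟨P, hP, hbig⟩ := exists_big D hD hn (sc D hD m)
  obtain ⟨m', hm'⟩ := side_scale D hD hP
  have hmm : m < m' := sc_lt D hD (by rw [← hm']; exact hbig)
  have hkey : sc D hD m * 2 ^ (m' - m).toNat = sc D hD m' := by
    unfold sc
    rw [mul_assoc, ← zpow_natCast (2:ℝ), ← zpow_add₀ (two_ne_zero)]
    congr 2
    omega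
  obtain ⟨Q', hQ', hside, -⟩ := descend D hD hP (corner_mem P) (m' - m).toNat
  refine ⟨Q', hQ', ?_⟩
  have h2pos : (0:ℝ) < 2 ^ (m' - m).toNat := by positivity
  have : Q'.side * 2 ^ (m' - m).toNat = sc D hD m * 2 ^ (m' - m).toNat := by
    rw [hside, hm', hkey]
  exact mul_right_cancel₀ (ne_of_gt h2pos) this

theorem exists_point_scale (m : ℤ) (x : Fin n → ℝ) : ∃ Q ∈ D, Q.side = sc D hD m ∧ x ∈ Q.toSet := by
  set y : Fin n → ℝ := fun i => x i + sc D hD m with hy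
  obtain ⟨P, hP, hK⟩ := hD.2.2 {x, y} (Set.Finite.isCompact (by simp))
  have hxP : x ∈ P.toSet := hK (Set.mem_insert _ _)
  have hyP : y ∈ P.toSet := hK (Set.mem_insert_of_mem _ rfl)
  obtain ⟨m', hm'⟩ := side_scale D hD hP
  have hmm : m < m' := by
    apply sc_lt D hD
    rw [← hm']
    set i0 : Fin n := ⟨0, hn⟩
    obtain ⟨h1, -⟩ := hxP i0
    obtain ⟨-, h2⟩ := hyP i0
    simp only [hy] at h2
    linarith
  have hkey : sc D hD m * 2 ^ (m' - m).toNat = sc D hD m' := by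
    unfold sc
    rw [mul_assoc, ← zpow_natCast (2:ℝ), ← zpow_add₀ (two_ne_zero)]
    congr 2
    omega
  obtain ⟨Q', hQ', hside, hxQ'⟩ := descend D hD hP hxP (m' - m).toNat
  refine ⟨Q', hQ', ?_, hxQ'⟩
  have h2pos : (0:ℝ) < 2 ^ (m' - m).toNat := by positivity
  have : Q'.side * 2 ^ (m' - m).toNat = sc D hD m * 2 ^ (m' - m).toNat := by
    rw [hside, hm', hkey]
  exact mul_right_cancel₀ (ne_of_gt h2pos) this

theorem grid_mem {Q : Cube n} (hQ : Q ∈ D) {m : ℤ} (hs : Q.side = sc D hD m) (k : Fin n → ℤ) :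
    (⟨fun i => Q.corner i + sc D hD m * k i, sc D hD m, sc_pos D hD m⟩ : Cube n) ∈ D := by
  have hsp := sc_pos D hD m
  set x : Fin n → ℝ := fun i => Q.corner i + sc D hD m * k i + sc D hD m / 2 with hxdef
  obtain ⟨Q'', hQ'', hside, hxQ''⟩ := exists_point_scale D hD hn m x
  obtain ⟨t, ht⟩ := same_scale_congr D hD hQ hQ'' (by rw [hs, hside])
  have hteq : ∀ i, t i = k i := by
    intro i
    obtain ⟨h1, h2⟩ := hxQ'' i
    rw [ht i, hs] at h1 h2
    simp only [hxdef] at h1 h2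
    rw [hside] at h2
    have htk : t i ≤ k i := by
      by_contra hcon
      push_neg at hcon
      have hc : (k i : ℝ) + 1 ≤ (t i : ℝ) := by exact_mod_cast hcon
      nlinarith [hsp]
    have hkt : k i ≤ t i := by
      by_contra hcon
      push_neg at hcon
      have hc : (t i : ℝ) + 1 ≤ (k i : ℝ) := by exact_mod_cast hcon
      nlinarith [hsp]
    omega
  have : Q'' = (⟨fun i => Q.corner i + sc D hD m * k i, sc D hD m, sc_pos D hD m⟩ : Cube n) := by
    apply cube_eq
    · funext i
      rw [ht i, hs, hteq i]
    · exact hside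
  rw [← this]
  exact hQ''

noncomputable def B (m : ℤ) : Cube n := (exists_scale D hD hn m).choose

theorem B_mem (m : ℤ) : B D hD hn m ∈ D := (exists_scale D hD hn m).choose_spec.1

theorem B_side (m : ℤ) : (B D hD hn m).side = sc D hD m := (exists_scale D hD hn m).choose_spec.2

noncomputable def phi (m : ℤ) : Fin n → ℝ := (B D hD hn m).corner

theorem corner_char {Q : Cube n} (hQ : Q ∈ D) {m : ℤ} (hs : Q.side = sc D hD m) :
    ∃ k : Fin n → ℤ, ∀ i, Q.corner i = phi D hD hn m i + sc D hD m * k i := by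
  obtain ⟨k, hk⟩ := same_scale_congr D hD (B_mem D hD hn m) hQ (by rw [B_side, hs])
  exact ⟨k, fun i => by have := hk i; rw [B_side] at this; exact this⟩

theorem grid_mem' (m : ℤ) (k : Fin n → ℤ) :
    (⟨fun i => phi D hD hn m i + sc D hD m * k i, sc D hD m, sc_pos D hD m⟩ : Cube n) ∈ D :=
  grid_mem D hD hn (B_mem D hD hn m) (B_side D hD hn m) k

theorem phi_step (m : ℤ) :
    ∃ k : Fin n → ℤ, ∀ i, phi D hD hn (m+1) i = phi D hD hn m i + sc D hD m * k i := by
  set Bm := B D hD hn (m+1) with hBm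
  have hpos := Bm.side_pos
  set C : Cube n := ⟨phi D hD hn (m+1), Bm.side / 2, by linarith⟩ with hCdef
  have hchild : C.IsChild Bm := ⟨rfl, fun _ => false, by funext i; simp [hCdef, phi, hBm]⟩
  have hCD : C ∈ D := hD.1 _ (B_mem D hD hn (m+1)) C hchild
  have hCside : C.side = sc D hD m := by
    show Bm.side / 2 = _
    rw [hBm, B_side, sc_double]
    ring
  obtain ⟨k, hk⟩ := same_scale_congr D hD (B_mem D hD hn m) hCD (by rw [B_side, hCside])
  refine ⟨k, fun i => ?_⟩
  have := hk i
  rw [B_side] at this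
  exact this

noncomputable def aInt (m : ℤ) : Fin n → ℤ := (phi_step D hD hn m).choose

theorem aInt_spec (m : ℤ) :
    ∀ i, phi D hD hn (m+1) i = phi D hD hn m i + sc D hD m * aInt D hD hn m i :=
  (phi_step D hD hn m).choose_spec

noncomputable def abar (m : ℤ) : Fin n → ZMod 3 := fun i => ((aInt D hD hn m i : ℤ) : ZMod 3)

def Mem3 (v : Fin n → ZMod 3) (m : ℤ) (R : Cube n) : Prop :=
  R.side = 3 * sc D hD m ∧ ∃ p : Fin n → ℤ,
    (∀ i, R.corner i = phi D hD hn m i + sc D hD m * p i) ∧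
    ∀ i, (p i : ZMod 3) = sig (abar D hD hn) v m i

omit hD hn in
theorem int3 {p q : ℤ} (h1 : p ≤ q + 2) (h2 : q ≤ p + 2) (h3 : ((p : ZMod 3) = (q : ZMod 3))) :
    p = q := by
  have hd : ((q - p : ℤ) : ZMod 3) = 0 := by push_cast; rw [h3]; ring
  rw [ZMod.intCast_zmod_eq_zero_iff_dvd] at hd
  omega

theorem mem3_scale_eq {v v' : Fin n → ZMod 3} {m m' : ℤ} {R R' : Cube n}
    (hR : Mem3 D hD hn v m R) (hR' : Mem3 D hD hn v' m' R') (h : R.side = R'.side) : m = m' := by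
  apply sc_inj D hD
  have := hR.1
  have := hR'.1
  have h3 : (3:ℝ) * sc D hD m = 3 * sc D hD m' := by linarith
  linarith

theorem mem3_eq_of_inter {v : Fin n → ZMod 3} {m : ℤ} {R R' : Cube n}
    (hR : Mem3 D hD hn v m R) (hR' : Mem3 D hD hn v m R')
    (hx : (R.toSet ∩ R'.toSet).Nonempty) : R = R' := by
  obtain ⟨hs, p, hc, hz⟩ := hR
  obtain ⟨hs', p', hc', hz'⟩ := hR'
  obtain ⟨y, hy, hy'⟩ := hx
  have hsp := sc_pos D hD m
  have hpp : ∀ i, p i = p' i := by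
    intro i
    obtain ⟨a1, a2⟩ := hy i
    obtain ⟨b1, b2⟩ := hy' i
    rw [hc i] at a1 a2
    rw [hc' i] at b1 b2
    rw [hs] at a2
    rw [hs'] at b2
    apply int3
    · by_contra hcon
      push_neg at hcon
      have hcon' : p' i + 3 ≤ p i := by omega
      have : (p' i : ℝ) + 3 ≤ (p i : ℝ) := by exact_mod_cast hcon'
      nlinarith
    · by_contra hcon
      push_neg at hcon
      have hcon' : p i + 3 ≤ p' i := by omega
      have : (p i : ℝ) + 3 ≤ (p' i : ℝ) := by exact_mod_cast hcon'
      nlinarith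
    · rw [hz i, hz' i]
  apply cube_eq
  · funext i
    rw [hc i, hc' i, hpp i]
  · rw [hs, hs']

theorem mem3_child {v : Fin n → ZMod 3} {m : ℤ} {R R' : Cube n}
    (hR : Mem3 D hD hn v m R) (hch : R'.IsChild R) : Mem3 D hD hn v (m-1) R' := by
  obtain ⟨hs, p, hc, hz⟩ := hR
  obtain ⟨hs', ε, hc'⟩ := hch
  have hdouble : sc D hD m = 2 * sc D hD (m-1) := by
    have := sc_double D hD (m-1)
    rw [show m - 1 + 1 = m from by ring] at this
    exact this
  have hphi : ∀ i, phi D hD hn m i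
      = phi D hD hn (m-1) i + sc D hD (m-1) * aInt D hD hn (m-1) i := by
    intro i
    have := aInt_spec D hD hn (m-1) i
    rw [show m - 1 + 1 = m from by ring] at this
    exact this
  refine ⟨by rw [hs', hs, hdouble]; ring,
    fun i => aInt D hD hn (m-1) i + 2 * p i + 3 * (if ε i then 1 else 0), fun i => ?_, fun i => ?_⟩
  · rw [hc']
    simp only
    rw [hc i, hphi i, hs, hdouble]
    by_cases hε : ε i <;> simp [hε] <;> push_cast <;> ring
  · have hsig : sig (abar D hD hn) v (m-1) i
        = abar D hD hn (m-1) i - sig (abar D hD hn) v m i := by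
      have := sig_rec' (abar D hD hn) v (m-1)
      rw [show m - 1 + 1 = m from by ring] at this
      exact congrFun this i
    rw [hsig, ← hz i]
    push_cast
    have h2 : (2 : ZMod 3) = -1 := by decide
    have h3 : (3 : ZMod 3) = 0 := by decide
    rw [h2, h3]
    unfold abar
    ring

theorem mem3_parent {v : Fin n → ZMod 3} {m : ℤ} {R : Cube n} (hR : Mem3 D hD hn v m R) :
    ∃ R'' : Cube n, Mem3 D hD hn v (m+1) R'' ∧ R.IsChild R'' := by
  obtain ⟨hs, p, hc, hz⟩ := hR
  set r : Fin n → ℤ := fun i => p i - aInt D hD hn m i with hrdef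
  set c : Fin n → ℤ := fun i => if r i % 2 = 0 then 0 else 3 with hcdef
  set q : Fin n → ℤ := fun i => (r i - c i) / 2 with hqdef
  have key : ∀ i, r i = 2 * q i + c i := by
    intro i
    simp only [hqdef, hcdef]
    by_cases h : r i % 2 = 0 <;> simp [h] <;> omega
  have hsp := sc_pos D hD (m+1)
  set R'' : Cube n := ⟨fun i => phi D hD hn (m+1) i + sc D hD (m+1) * q i,
    3 * sc D hD (m+1), by linarith⟩ with hR''
  have hcbar : ∀ i, ((c i : ℤ) : ZMod 3) = 0 := by
    intro i
    simp only [hcdef]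
    by_cases h : r i % 2 = 0
    · rw [if_pos h]; push_cast; ring
    · rw [if_neg h]; push_cast; decide
  have hqbar : ∀ i, ((q i : ℤ) : ZMod 3) = sig (abar D hD hn) v (m+1) i := by
    intro i
    have hrec := congrFun (sig_rec (abar D hD hn) v m) i
    have hr3 : ((r i : ℤ) : ZMod 3) = 2 * ((q i : ℤ) : ZMod 3) := by
      rw [key i]; push_cast; rw [hcbar i]; push_cast; ring
    have hrp : ((r i : ℤ) : ZMod 3)
        = sig (abar D hD hn) v m i - abar D hD hn m i := by
      simp only [hrdef]
      push_cast
      rw [hz i]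
      unfold abar
      ring
    have hrec' : sig (abar D hD hn) v (m+1) i + sig (abar D hD hn) v m i
        = abar D hD hn m i := by
      have := congrFun (sig_rec (abar D hD hn) v m) i
      simpa using this
    have h2 : (2 : ZMod 3) = -1 := by decide
    rw [h2] at hr3
    linear_combination -hrec' - hrp + hr3
  refine ⟨R'', ⟨rfl, q, fun i => rfl, hqbar⟩, ?_, fun i => decide (¬ r i % 2 = 0), ?_⟩
  · show R.side = (3 * sc D hD (m+1)) / 2
    rw [hs, sc_double]
    ring
  · funext i
    show R.corner i = R''.corner i + _
    rw [hc i]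
    have hphi := aInt_spec D hD hn m i
    have hpi : p i = aInt D hD hn m i + 2 * q i + c i := by
      have := key i
      simp only [hrdef] at this
      omega
    simp only [hR'']
    by_cases hpar : r i % 2 = 0
    · rw [if_neg (by simp [hpar])]
      rw [hphi, hpi]
      have : c i = 0 := by simp only [hcdef]; rw [if_pos hpar]
      rw [this, sc_double]
      push_cast
      ring
    · rw [if_pos (show decide (¬ r i % 2 = 0) = true by simp [hpar])]
      rw [hphi, hpi]
      have : c i = 3 := by simp only [hcdef]; rw [if_neg hpar]
      rw [this, sc_double]
      push_cast
      ring

theorem mem3_up {v : Fin n → ZMod 3} {m : ℤ} {R : Cube n} (h : Mem3 D hD hn v m R)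
    {M : ℤ} (hm : m ≤ M) : ∃ A : Cube n, Mem3 D hD hn v M A ∧ R.toSet ⊆ A.toSet := by
  obtain ⟨d, hd⟩ : ∃ d : ℕ, M = m + d := ⟨(M - m).toNat, by omega⟩
  subst hd
  clear hm
  induction d with
  | zero => exact ⟨R, by simpa using h, subset_rfl⟩
  | succ d ih =>
    obtain ⟨A, hA, hsub⟩ := ih
    obtain ⟨A', hA', hch⟩ := mem3_parent D hD hn hA
    refine ⟨A', ?_, hsub.trans (child_subset hch)⟩
    rw [show m + ((d+1 : ℕ) : ℤ) = (m + d) + 1 from by push_cast; ring]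
    exact hA'

theorem mem3_subset_of_corner {v : Fin n → ZMod 3} {m : ℤ} {R : Cube n}
    (hR : Mem3 D hD hn v m R) {M : ℤ} (hm : m ≤ M) :
    ∀ C : Cube n, Mem3 D hD hn v M C → R.corner ∈ C.toSet → R.toSet ⊆ C.toSet := by
  obtain ⟨d, hd⟩ : ∃ d : ℕ, M = m + d := ⟨(M - m).toNat, by omega⟩
  subst hd
  clear hm
  induction d with
  | zero =>
    intro C hC hx
    rw [mem3_eq_of_inter D hD hn hR (by simpa using hC) ⟨R.corner, corner_mem R, hx⟩]
  | succ d ih =>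
    intro C hC hx
    obtain ⟨C', hch, hx'⟩ := child_point hx
    have hC' : Mem3 D hD hn v (m + d) C' := by
      have := mem3_child D hD hn hC hch
      rw [show m + ((d+1 : ℕ) : ℤ) - 1 = m + d from by push_cast; ring] at this
      exact this
    exact (ih C' hC' hx').trans (child_subset hch)

theorem mem3_desc {v : Fin n → ZMod 3} {m : ℤ} {R : Cube n}
    (hR : Mem3 D hD hn v m R) {M : ℤ} (hm : m ≤ M) :
    ∀ C : Cube n, Mem3 D hD hn v M C → R.toSet ⊆ C.toSet → R.IsDescendant C := by
  obtain ⟨d, hd⟩ : ∃ d : ℕ, M = m + d := ⟨(M - m).toNat, by omega⟩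
  subst hd
  clear hm
  induction d with
  | zero =>
    intro C hC hsub
    have hEq := mem3_eq_of_inter D hD hn hR (by simpa using hC)
      ⟨R.corner, corner_mem R, hsub (corner_mem R)⟩
    rw [hEq]
    exact Relation.ReflTransGen.refl
  | succ d ih =>
    intro C hC hsub
    obtain ⟨C', hch, hx'⟩ := child_point (hsub (corner_mem R))
    have hC' : Mem3 D hD hn v (m + d) C' := by
      have := mem3_child D hD hn hC hch
      rw [show m + ((d+1 : ℕ) : ℤ) - 1 = m + d from by push_cast; ring] at this
      exact this
    have hsub' : R.toSet ⊆ C'.toSet :=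
      mem3_subset_of_corner D hD hn hR (by omega) C' hC' hx'
    exact Relation.ReflTransGen.tail (ih C' hC' hsub') hch

omit hD hn in
theorem subset_bounds {Q R : Cube n} (hsub : Q.toSet ⊆ R.toSet) (i : Fin n) :
    R.corner i ≤ Q.corner i ∧ Q.corner i + Q.side ≤ R.corner i + R.side := by
  classical
  have h1 := hsub (corner_mem Q) i
  refine ⟨h1.1, ?_⟩
  by_contra hcon
  push_neg at hcon
  set y : Fin n → ℝ := Function.update Q.corner i (max (Q.corner i) (R.corner i + R.side)) with hy
  have hyQ : y ∈ Q.toSet := by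
    intro j
    by_cases hj : j = i
    · subst hj
      rw [hy, Function.update_self]
      exact ⟨le_max_left _ _, max_lt (by have := Q.side_pos; linarith) hcon⟩
    · rw [hy, Function.update_of_ne hj]
      exact (corner_mem Q) j
  have := (hsub hyQ i).2
  rw [hy, Function.update_self] at this
  have := le_max_right (Q.corner i) (R.corner i + R.side)
  linarith

theorem mem3_contains {Q : Cube n} (hQ : Q ∈ D) {m : ℤ} (hs : Q.side = sc D hD m)
    (v : Fin n → ZMod 3) : ∃ R : Cube n, Mem3 D hD hn v m R ∧ Q.toSet ⊆ R.toSet := by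
  obtain ⟨k, hk⟩ := corner_char D hD hn hQ hs
  set p : Fin n → ℤ := fun i => k i - ((k i : ZMod 3) - sig (abar D hD hn) v m i).val with hp
  have hsp := sc_pos D hD m
  have hval : ∀ i, (p i : ZMod 3) = sig (abar D hD hn) v m i := by
    intro i
    simp only [hp]
    push_cast
    rw [ZMod.natCast_val, ZMod.cast_id]
    ring
  have hbound : ∀ i, k i - 2 ≤ p i ∧ p i ≤ k i := by
    intro i
    have := ZMod.val_lt ((k i : ZMod 3) - sig (abar D hD hn) v m i)
    simp only [hp]
    omega
  refine ⟨⟨fun i => phi D hD hn m i + sc D hD m * p i, 3 * sc D hD m, by linarith⟩,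
    ⟨rfl, p, fun i => rfl, hval⟩, ?_⟩
  intro y hy i
  obtain ⟨h1, h2⟩ := hy i
  rw [hk i] at h1 h2
  rw [hs] at h2
  obtain ⟨hb1, hb2⟩ := hbound i
  have hc1 : (p i : ℝ) ≤ (k i : ℝ) := by exact_mod_cast hb2
  have hc2 : (k i : ℝ) ≤ (p i : ℝ) + 2 := by exact_mod_cast (by omega : k i ≤ p i + 2)
  constructor
  · simp only
    nlinarith
  · simp only
    nlinarith

end Lattice

theorem fin0_eq {α : Type*} (f g : Fin 0 → α) : f = g :=
  funext fun i => i.elim0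

theorem triple_desc0 {Q P : Cube 0} (h : Q.IsDescendant P) :
    Q.triple.IsDescendant P.triple := by
  induction h with
  | refl => exact Relation.ReflTransGen.refl
  | @tail b c hab hbc ih =>
    refine Relation.ReflTransGen.tail ih ⟨?_, fun _ => false, fin0_eq _ _⟩
    show 3 * b.side = (3 * c.side) / 2
    rw [hbc.1]
    ring

end ThreeLattice

theorem three_lattice_theorem {n : ℕ} (D : Set (Cube n)) (hD : IsDyadicLattice D) :
    ∃ Ds : Fin (3 ^ n) → Set (Cube n),
      (∀ j, IsDyadicLattice (Ds j)) ∧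
      (Cube.triple '' D = ⋃ j, Ds j) ∧
      (∀ Q ∈ D, ∀ j, ∃! R : Cube n,
        R ∈ Ds j ∧ R.side = 3 * Q.side ∧ Q.toSet ⊆ R.toSet) := by
  classical
  open ThreeLattice in
  rcases Nat.eq_zero_or_pos n with hn0 | hn
  · -- degenerate case n = 0
    subst hn0
    refine ⟨fun _ => Cube.triple '' D, fun j => ⟨?_, ?_, ?_⟩, ?_, ?_⟩
    · rintro R ⟨Q, hQ, rfl⟩ R' hch
      set Q' : Cube 0 := ⟨R'.corner, Q.side / 2, by have := Q.side_pos; linarith⟩ with hQ'def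
      have hQ'ch : Q'.IsChild Q := ⟨rfl, fun _ => false, fin0_eq _ _⟩
      refine ⟨Q', hD.1 Q hQ Q' hQ'ch, ?_⟩
      apply cube_eq (fin0_eq _ _)
      show 3 * Q'.side = R'.side
      rw [hch.1]
      show 3 * (Q.side / 2) = (3 * Q.side) / 2
      ring
    · rintro R ⟨Q, hQ, rfl⟩ R' ⟨Q', hQ', rfl⟩
      obtain ⟨P, hP, h1, h2⟩ := hD.2.1 Q hQ Q' hQ'
      exact ⟨P.triple, ⟨P, hP, rfl⟩, triple_desc0 h1, triple_desc0 h2⟩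
    · intro K hK
      obtain ⟨Q, hQ, hsub⟩ := hD.2.2 K hK
      exact ⟨Q.triple, ⟨Q, hQ, rfl⟩, hsub.trans (subset_triple Q)⟩
    · ext R
      simp only [Set.mem_iUnion]
      exact ⟨fun h => ⟨⟨0, by norm_num⟩, h⟩, fun ⟨j, h⟩ => h⟩
    · intro Q hQ j
      refine ⟨Q.triple, ⟨⟨Q, hQ, rfl⟩, rfl, subset_triple Q⟩, ?_⟩
      rintro R' ⟨⟨Q', hQ', rfl⟩, hside, hsub⟩
      exact cube_eq (fin0_eq _ _) hside
  · -- main case n ≥ 1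
    have cardeq : Fintype.card (Fin n → ZMod 3) = 3 ^ n := by
      rw [Fintype.card_fun, ZMod.card, Fintype.card_fin]
    set eqv : Fin (3 ^ n) ≃ (Fin n → ZMod 3) := (Fintype.equivFinOfCardEq cardeq).symm with heqv
    refine ⟨fun j => {R | ∃ m : ℤ, Mem3 D hD hn (eqv j) m R}, fun j => ⟨?_, ?_, ?_⟩, ?_, ?_⟩
    · rintro R ⟨m, hm⟩ R' hch
      exact ⟨m - 1, mem3_child D hD hn hm hch⟩
    · rintro R1 ⟨m1, hm1⟩ R2 ⟨m2, hm2⟩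
      have hK : IsCompact (closure R1.toSet ∪ closure R2.toSet) :=
        (cube_compact_closure R1).union (cube_compact_closure R2)
      obtain ⟨Q, hQ, hKQ⟩ := hD.2.2 _ hK
      obtain ⟨mq, hq⟩ := side_scale D hD hQ
      obtain ⟨R0, hR0, hQR0⟩ := mem3_contains D hD hn hQ hq (eqv j)
      set M := max (max m1 m2) mq with hM
      obtain ⟨A, hA, hR0A⟩ := mem3_up D hD hn hR0 (le_max_right _ _ : mq ≤ M)
      have hsub1 : R1.toSet ⊆ A.toSet :=
        (subset_closure.trans ((Set.subset_union_left).trans hKQ)).trans (hQR0.trans hR0A)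
      have hsub2 : R2.toSet ⊆ A.toSet :=
        (subset_closure.trans ((Set.subset_union_right).trans hKQ)).trans (hQR0.trans hR0A)
      exact ⟨A, ⟨M, hA⟩,
        mem3_desc D hD hn hm1 (le_trans (le_max_left _ _) (le_max_left _ _)) A hA hsub1,
        mem3_desc D hD hn hm2 (le_trans (le_max_right _ _) (le_max_left _ _)) A hA hsub2⟩
    · intro K hK
      obtain ⟨Q, hQ, hsub⟩ := hD.2.2 K hK
      obtain ⟨mq, hq⟩ := side_scale D hD hQ
      obtain ⟨R, hR, hQR⟩ := mem3_contains D hD hn hQ hq (eqv j)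
      exact ⟨R, ⟨mq, hR⟩, hsub.trans hQR⟩
    · ext R
      simp only [Set.mem_image, Set.mem_iUnion, Set.mem_setOf_eq]
      constructor
      · rintro ⟨Q, hQ, rfl⟩
        obtain ⟨m, hs⟩ := side_scale D hD hQ
        obtain ⟨k, hk⟩ := corner_char D hD hn hQ hs
        obtain ⟨v, hv⟩ := sig_surj (abar D hD hn) m (fun i => ((k i : ℤ) : ZMod 3))
        refine ⟨eqv.symm v, m, ?_, k, hk, fun i => ?_⟩
        · show 3 * Q.side = 3 * sc D hD m
          rw [hs]
        · rw [Equiv.apply_symm_apply]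
          exact (congrFun hv i).symm
      · rintro ⟨j, m, hside, p, hc, hz⟩
        refine ⟨⟨R.corner, sc D hD m, sc_pos D hD m⟩, ?_, ?_⟩
        · have := grid_mem' D hD hn m p
          have heq : (⟨fun i => phi D hD hn m i + sc D hD m * p i, sc D hD m,
              sc_pos D hD m⟩ : Cube n) = ⟨R.corner, sc D hD m, sc_pos D hD m⟩ :=
            cube_eq (funext fun i => (hc i).symm) rfl
          rwa [heq] at this
        · exact (cube_eq (Q := R)
            (R := Cube.triple ⟨R.corner, sc D hD m, sc_pos D hD m⟩) rfl hside).symm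
    · intro Q hQ j
      obtain ⟨m, hs⟩ := side_scale D hD hQ
      obtain ⟨R, hR, hQR⟩ := mem3_contains D hD hn hQ hs (eqv j)
      refine ⟨R, ⟨⟨m, hR⟩, by rw [hR.1, hs], hQR⟩, ?_⟩
      rintro R' ⟨⟨m', hR'⟩, hside', hsub'⟩
      have hmm : m' = m := by
        apply sc_inj D hD
        have h1 := hR'.1
        rw [hside', hs] at h1
        linarith
      subst hmm
      exact mem3_eq_of_inter D hD hn hR' hR
        ⟨Q.corner, hsub' (corner_mem Q), hQR (corner_mem Q)⟩
end

section
/- For every m ≥ 1 there exist 3^{mn} dyadic lattices D_{(1)}, ..., D_{(3^{mn})} in ℝⁿ such that for any m arbitrary cubes Q_1, ..., Q_m in ℝⁿ one can find an index i and cubes Q̃_1, ..., Q̃_m ∈ D_{(i)} with Q̃_k ⊇ Q_k and |Q̃_k| ≤ 3^{mn}|Q_k| for each k. -/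
open MeasureTheory Set
open scoped ENNReal Classical

noncomputable section
namespace TLat

variable (m : ℕ)

instance : NeZero (3 ^ m) := ⟨(pow_pos (by norm_num : (0:ℕ) < 3) m).ne'⟩

/-- the unit `2` of `ZMod (3^m)`. -/
def u : (ZMod (3 ^ m))ˣ := ZMod.unitOfCoprime 2 (Nat.Coprime.pow_right m (by decide))

/-- residue of lattice `r` at scale `k`. -/
def nu (k : ℤ) (r : Fin (3 ^ m)) : ℕ :=
  (((u m ^ k : (ZMod (3 ^ m))ˣ) : ZMod (3 ^ m)) * ((r : ℕ) : ZMod (3 ^ m))).val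

/-- the fractional anchor numerator. -/
def Pk (k : ℤ) : ℤ := 3 ^ m * 2 ^ (k % 4).toNat

/-- five times the anchor of lattice `r` at scale `k` (in units of `2^{-k}`). -/
def A (k : ℤ) (r : Fin (3 ^ m)) : ℤ := Pk m k + 5 * (nu m k r : ℤ)

lemma nu_lt (k : ℤ) (r : Fin (3 ^ m)) : nu m k r < 3 ^ m := ZMod.val_lt _

lemma nu_cast (k : ℤ) (r : Fin (3 ^ m)) :
    ((nu m k r : ℕ) : ZMod (3 ^ m)) =
      ((u m ^ k : (ZMod (3 ^ m))ˣ) : ZMod (3 ^ m)) * ((r : ℕ) : ZMod (3 ^ m)) := by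
  simp [nu, ZMod.natCast_val, ZMod.cast_id]

lemma nu_step (k : ℤ) (r : Fin (3 ^ m)) :
    ((3 ^ m : ℕ) : ℤ) ∣ (nu m (k + 1) r : ℤ) - 2 * (nu m k r : ℤ) := by
  have h : (((nu m (k + 1) r : ℤ) - 2 * (nu m k r : ℤ) : ℤ) : ZMod (3 ^ m)) = 0 := by
    push_cast
    rw [nu_cast, nu_cast, zpow_add_one, Units.val_mul, u, ZMod.coe_unitOfCoprime]
    push_cast
    ring
  exact (ZMod.intCast_zmod_eq_zero_iff_dvd _ _).mp h

lemma A_step (k : ℤ) (r : Fin (3 ^ m)) :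
    ∃ w : ℤ, A m (k + 1) r = 2 * A m k r + 5 * 3 ^ m * w := by
  obtain ⟨d, hd⟩ := nu_step m k r
  push_cast at hd
  have h03 : k % 4 = 0 ∨ k % 4 = 1 ∨ k % 4 = 2 ∨ k % 4 = 3 := by omega
  rcases h03 with h | h | h | h
  · refine ⟨d, ?_⟩
    have h1 : (k + 1) % 4 = 1 := by omega
    simp only [A, Pk, h, h1, Int.toNat_one, (rfl : (2:ℤ).toNat = 2), (rfl : (3:ℤ).toNat = 3), Int.toNat_zero]
    push_cast
    linarith [hd]
  · refine ⟨d, ?_⟩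
    have h1 : (k + 1) % 4 = 2 := by omega
    simp only [A, Pk, h, h1, Int.toNat_one, (rfl : (2:ℤ).toNat = 2), (rfl : (3:ℤ).toNat = 3), Int.toNat_zero]
    push_cast
    linarith [hd]
  · refine ⟨d, ?_⟩
    have h1 : (k + 1) % 4 = 3 := by omega
    simp only [A, Pk, h, h1, Int.toNat_one, (rfl : (2:ℤ).toNat = 2), (rfl : (3:ℤ).toNat = 3), Int.toNat_zero]
    push_cast
    linarith [hd]
  · refine ⟨d - 3, ?_⟩
    have h1 : (k + 1) % 4 = 0 := by omega
    simp only [A, Pk, h, h1, Int.toNat_one, (rfl : (2:ℤ).toNat = 2), (rfl : (3:ℤ).toNat = 3), Int.toNat_zero]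
    push_cast
    linarith [hd]

lemma five_not_dvd_A (k : ℤ) (r : Fin (3 ^ m)) : ¬ (5 : ℤ) ∣ A m k r := by
  intro h
  have h2 : (5 : ℤ) ∣ Pk m k := by
    have := dvd_sub h (Dvd.intro _ rfl : (5:ℤ) ∣ 5 * (nu m k r : ℤ))
    simpa [A] using this
  have h3 : (5 : ℕ) ∣ 3 ^ m * 2 ^ (k % 4).toNat := by
    have h2' : (5 : ℤ) ∣ (3:ℤ) ^ m * 2 ^ (k % 4).toNat := by simpa [Pk] using h2
    exact_mod_cast h2'
  have hc : Nat.Coprime 5 (3 ^ m * 2 ^ (k % 4).toNat) :=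
    Nat.Coprime.mul_right (Nat.Coprime.pow_right _ (by decide))
      (Nat.Coprime.pow_right _ (by decide))
  have := Nat.Coprime.eq_one_of_dvd hc h3
  simp at this

/-- side length at scale `k`. -/
def side (k : ℤ) : ℝ := (3 : ℝ) ^ m * (2 : ℝ) ^ (-k)

lemma side_pos (k : ℤ) : 0 < side m k := by
  unfold side; positivity

lemma two_zpow_pos (k : ℤ) : (0:ℝ) < (2:ℝ) ^ k := zpow_pos (by norm_num) k

lemma two_zpow_mul_neg (k : ℤ) : (2:ℝ) ^ k * (2:ℝ) ^ (-k) = 1 := by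
  rw [← zpow_add₀ (by norm_num : (2:ℝ) ≠ 0)]; simp

lemma side_succ (k : ℤ) : side m (k + 1) = side m k / 2 := by
  unfold side
  rw [show -(k+1) = -k + (-1) by ring, zpow_add₀ (by norm_num : (2:ℝ) ≠ 0)]
  norm_num
  ring

/-- `x` is a gridline (left endpoint) of lattice `r` at scale `k`. -/
def grid (k : ℤ) (r : Fin (3 ^ m)) (x : ℝ) : Prop :=
  ∃ z : ℤ, 5 * (2:ℝ) ^ k * x = (A m k r : ℝ) + 5 * 3 ^ m * z

lemma grid_step {k : ℤ} {r : Fin (3 ^ m)} {x : ℝ} (h : grid m k r x) : grid m (k + 1) r x := by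
  obtain ⟨z, hz⟩ := h
  obtain ⟨w, hw⟩ := A_step m k r
  have hwR : (A m (k+1) r : ℝ) = 2 * (A m k r : ℝ) + 5 * 3 ^ m * w := by exact_mod_cast hw
  refine ⟨2 * z - w, ?_⟩
  rw [zpow_add_one₀ (by norm_num : (2:ℝ) ≠ 0)]
  push_cast
  linear_combination 2 * hz - hwR

lemma grid_step_half {k : ℤ} {r : Fin (3 ^ m)} {x : ℝ} (h : grid m k r x) :
    grid m (k + 1) r (x + side m k / 2) := by
  obtain ⟨z, hz⟩ := h
  obtain ⟨w, hw⟩ := A_step m k r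
  have hwR : (A m (k+1) r : ℝ) = 2 * (A m k r : ℝ) + 5 * 3 ^ m * w := by exact_mod_cast hw
  have h1 := two_zpow_mul_neg k
  refine ⟨2 * z - w + 1, ?_⟩
  rw [zpow_add_one₀ (by norm_num : (2:ℝ) ≠ 0)]
  unfold side
  push_cast
  linear_combination 2 * hz - hwR + 5 * (3:ℝ) ^ m * h1

lemma grid_mono {k k' : ℤ} (hkk : k ≤ k') {r : Fin (3 ^ m)} {x : ℝ} (h : grid m k r x) :
    grid m k' r x := by
  exact Int.le_induction (motive := fun t _ => grid m t r x) h (fun n _ ih => grid_step m ih) k' hkk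

lemma grid_sub {k : ℤ} {r : Fin (3 ^ m)} {x y : ℝ} (hx : grid m k r x) (hy : grid m k r y) :
    ∃ z : ℤ, y - x = side m k * z := by
  obtain ⟨a, ha⟩ := hx
  obtain ⟨b, hb⟩ := hy
  refine ⟨b - a, ?_⟩
  have h1 := two_zpow_mul_neg k
  unfold side
  push_cast
  have h5 : (5:ℝ) * 2 ^ k * (y - x) = 5 * 3 ^ m * ((b:ℝ) - a) := by linear_combination hb - ha
  have hk0 : ((2:ℝ) ^ k) ≠ 0 := (two_zpow_pos k).ne'
  have : (y - x) * ((2:ℝ)^k * 5) = (3:ℝ) ^ m * 2 ^ (-k) * ((b:ℝ) - (a:ℝ)) * (2 ^ k * 5) := by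
    rw [show (3:ℝ) ^ m * 2 ^ (-k) * ((b:ℝ) - (a:ℝ)) * ((2:ℝ) ^ k * 5)
        = 5 * 3 ^ m * ((b:ℝ) - a) * (2 ^ k * 2 ^ (-k)) by ring, h1]
    linarith [h5]
  have h25 : ((2:ℝ) ^ k * 5) ≠ 0 := by positivity
  exact mul_right_cancel₀ h25 this

lemma grid_shift {k : ℤ} {r : Fin (3 ^ m)} {x : ℝ} (h : grid m k r x) (z : ℤ) :
    grid m k r (x + side m k * z) := by
  obtain ⟨a, ha⟩ := h
  refine ⟨a + z, ?_⟩
  have h1 := two_zpow_mul_neg k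
  unfold side
  push_cast
  linear_combination ha + 5 * (3:ℝ) ^ m * (z:ℝ) * h1

variable {n : ℕ}

/-- membership of a cube in lattice `t` at scale `k`. -/
def Mem (t : Fin n → Fin (3 ^ m)) (k : ℤ) (Q : Cube n) : Prop :=
  Q.side = side m k ∧ ∀ i, grid m k (t i) (Q.corner i)

/-- the dyadic lattice indexed by `t`. -/
def D (t : Fin n → Fin (3 ^ m)) : Set (Cube n) := {Q | ∃ k, Mem m t k Q}

lemma cube_eq {Q P : Cube n} (hc : Q.corner = P.corner) (hs : Q.side = P.side) : Q = P := by
  cases Q; cases P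
  dsimp only at hc hs
  subst hc; subst hs; rfl

lemma child_mem {t : Fin n → Fin (3 ^ m)} {k : ℤ} {Q : Cube n} (h : Mem m t k Q)
    {Q' : Cube n} (hc : Q'.IsChild Q) : Mem m t (k + 1) Q' := by
  obtain ⟨hside, ε, hε⟩ := hc
  constructor
  · rw [hside, h.1, side_succ]
  · intro i
    rw [hε]
    by_cases hei : ε i
    · simpa [hei, h.1] using grid_step_half m (h.2 i)
    · simpa [hei] using grid_step m (h.2 i)

lemma parent_exists {t : Fin n → Fin (3 ^ m)} {k : ℤ} {Q : Cube n} (h : Mem m t k Q) :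
    ∃ P : Cube n, Mem m t (k - 1) P ∧ Q.IsChild P ∧
      ∀ i, P.corner i ≤ Q.corner i ∧ Q.corner i ≤ P.corner i + side m k := by
  -- per-coordinate data
  have key : ∀ i, ∃ y : ℝ, grid m (k-1) (t i) y ∧
      (Q.corner i = y ∨ Q.corner i = y + side m (k-1) / 2) := by
    intro i
    obtain ⟨z, hz⟩ := h.2 i
    obtain ⟨w, hw⟩ := A_step m (k-1) (t i)
    rw [sub_add_cancel] at hw
    have hwR : (A m k (t i) : ℝ) = 2 * (A m (k-1) (t i) : ℝ) + 5 * 3 ^ m * w := by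
      exact_mod_cast hw
    have h2 : (2:ℝ) ^ k = 2 ^ (k-1) * 2 := by
      rw [← zpow_add_one₀ (by norm_num : (2:ℝ) ≠ 0), sub_add_cancel]
    rcases Int.even_or_odd (w + z) with ⟨q, hq⟩ | ⟨q, hq⟩
    · -- even : corner is itself a gridline at scale k-1
      refine ⟨Q.corner i, ⟨q, ?_⟩, Or.inl rfl⟩
      have hqR : ((w:ℝ) + z) = q + q := by exact_mod_cast congrArg (Int.cast : ℤ → ℝ) hq
      rw [h2] at hz
      push_cast at hz ⊢
      linear_combination hz / 2 + hwR / 2 + 5 * (3:ℝ)^m / 2 * hqR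
    · -- odd
      refine ⟨Q.corner i - side m (k-1) / 2, ⟨q, ?_⟩, Or.inr (by ring)⟩
      have hqR : ((w:ℝ) + z) = 2*q + 1 := by exact_mod_cast congrArg (Int.cast : ℤ → ℝ) hq
      rw [h2] at hz
      have h1 : (2:ℝ) ^ (k-1) * (2:ℝ) ^ (-(k-1)) = 1 := two_zpow_mul_neg (k-1)
      unfold side
      push_cast at hz ⊢
      linear_combination hz / 2 + hwR / 2 + 5 * (3:ℝ)^m / 2 * hqR - 5*(3:ℝ)^m/2 * h1
  choose y hy hcase using key
  refine ⟨⟨y, side m (k-1), side_pos m _⟩, ⟨rfl, fun i => hy i⟩, ⟨?_, ?_⟩, ?_⟩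
  · -- side relation
    show Q.side = side m (k-1) / 2
    rw [h.1, ← side_succ, sub_add_cancel]
  · refine ⟨fun i => if Q.corner i = y i then false else true, funext fun i => ?_⟩
    by_cases hQ : Q.corner i = y i
    · simp [hQ]
    · rcases hcase i with hc | hc
      · exact absurd hc hQ
      · simp [hQ, hc, (side_pos m (k-1)).ne']
  · intro i
    have hs2 : side m (k-1) / 2 = side m k := by rw [← side_succ, sub_add_cancel]
    have hsp := side_pos m k
    rcases hcase i with hc | hc
    · rw [hc]
      exact ⟨le_refl _, by linarith⟩
    · rw [hc, hs2]
      exact ⟨by linarith, le_refl _⟩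

lemma ancestor_at {t : Fin n → Fin (3 ^ m)} (j : ℕ) {k : ℤ} {Q : Cube n} (h : Mem m t k Q) :
    ∃ P : Cube n, Mem m t (k - j) P ∧ Q.IsDescendant P := by
  induction j with
  | zero => exact ⟨Q, by simpa using h, Relation.ReflTransGen.refl⟩
  | succ j ih =>
    obtain ⟨P, hP, hd⟩ := ih
    obtain ⟨P', hP', hc, _⟩ := parent_exists m hP
    refine ⟨P', ?_, hd.tail hc⟩
    have e : k - (j:ℤ) - 1 = k - ((j:ℕ)+1 : ℕ) := by push_cast; ring
    rwa [e] at hP'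

lemma eq_of_same_scale {t : Fin n → Fin (3 ^ m)} {k : ℤ} {Q P : Cube n}
    (hQ : Mem m t k Q) (hP : Mem m t k P)
    (h : ∀ i, P.corner i ≤ Q.corner i ∧ Q.corner i < P.corner i + P.side) : Q = P := by
  refine cube_eq (funext fun i => ?_) (by rw [hQ.1, hP.1])
  obtain ⟨z, hz⟩ := grid_sub m (hP.2 i) (hQ.2 i)
  have hsp := side_pos m k
  have h1 := (h i).1
  have h2 := (h i).2
  rw [hP.1] at h2
  -- 0 ≤ side * z < side
  have hz0 : (0:ℝ) ≤ side m k * z := by linarith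
  have hz1 : side m k * z < side m k := by linarith
  have hz0' : (0:ℤ) ≤ z := by
    by_contra hcon
    push_neg at hcon
    have hz1 : z ≤ -1 := by omega
    have : (z:ℝ) ≤ -1 := by exact_mod_cast hz1
    nlinarith
  have hz1' : (z:ℤ) < 1 := by
    by_contra hcon
    push_neg at hcon
    have : (1:ℝ) ≤ (z:ℝ) := by exact_mod_cast hcon
    nlinarith
  have : z = 0 := by omega
  rw [this] at hz
  push_cast at hz
  linarith

lemma descend {t : Fin n → Fin (3 ^ m)} (j : ℕ) :
    ∀ {k : ℤ} {Q P : Cube n}, Mem m t k Q → Mem m t (k - j) P →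
    (∀ i, P.corner i ≤ Q.corner i ∧ Q.corner i < P.corner i + P.side) → Q.IsDescendant P := by
  induction j with
  | zero =>
    intro k Q P hQ hP h
    have : Q = P := eq_of_same_scale m hQ (by simpa using hP) h
    rw [this]
    exact Relation.ReflTransGen.refl
  | succ j ih =>
    intro k Q P hQ hP h
    obtain ⟨Q1, hQ1, hc, hbound⟩ := parent_exists m hQ
    have hP' : Mem m t ((k-1) - (j:ℤ)) P := by
      have e : k - ((j:ℕ)+1 : ℕ) = (k-1) - (j:ℤ) := by push_cast; ring
      rwa [e] at hP
    have hcorner : ∀ i, P.corner i ≤ Q1.corner i ∧ Q1.corner i < P.corner i + P.side := by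
      intro i
      have hb := hbound i
      have h1 := (h i).1
      have h2 := (h i).2
      constructor
      · -- P.corner i ≤ Q1.corner i
        have hgP : grid m (k-1) (t i) (P.corner i) :=
          grid_mono m (by omega : (k-1) - (j:ℤ) ≤ k - 1) (hP'.2 i)
        obtain ⟨z, hz⟩ := grid_sub m (hgP) (hQ1.2 i)
        -- Q1.corner i - P.corner i = side (k-1) * z ; Q1.corner ≥ Q.corner - side k > P.corner - side(k-1)
        have hsp := side_pos m (k-1)
        have hs2 : side m (k-1) / 2 = side m k := by rw [← side_succ, sub_add_cancel]
        by_contra hcon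
        push_neg at hcon
        have hzneg : side m (k-1) * z < 0 := by linarith
        have hz1 : z ≤ -1 := by
          by_contra hcon2
          push_neg at hcon2
          have h0 : (0:ℤ) ≤ z := by omega
          have : (0:ℝ) ≤ (z:ℝ) := by exact_mod_cast h0
          nlinarith
        have : (z:ℝ) ≤ -1 := by exact_mod_cast hz1
        -- then Q1.corner ≤ P.corner - side(k-1), so Q.corner ≤ P.corner - side(k-1)/2 < P.corner
        have hQ1le : Q1.corner i ≤ P.corner i - side m (k-1) := by nlinarith
        have : Q.corner i ≤ P.corner i - side m k := by
          have := hb.2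
          rw [← hs2] at *
          linarith
        have := side_pos m k
        linarith
      · exact lt_of_le_of_lt (hb.1) h2
    exact Relation.ReflTransGen.head hc (ih hQ1 hP' hcorner)

lemma bigcube (t : Fin n → Fin (3 ^ m)) {M : ℝ} (hM : 0 ≤ M) {K : ℤ}
    (hK : (2:ℝ) ^ K * (5 * M + 1) ≤ 1) :
    ∃ P : Cube n, Mem m t K P ∧ ∀ i, P.corner i ≤ -M ∧ M < P.corner i + side m K := by
  have hb := two_zpow_pos K
  set b := (2:ℝ) ^ K with hbdef
  have h1 : b * (5 * M) ≤ 1 - b := by nlinarith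
  have key : ∀ r : Fin (3 ^ m), ∃ c : ℝ, grid m K r c ∧ c ≤ -M ∧ M < c + side m K := by
    intro r
    set a := A m K r with ha
    set ρ := a % (5 * 3 ^ m) with hρ
    have h5N : (0:ℤ) < 5 * 3 ^ m := by positivity
    have hρ0 : 0 ≤ ρ := Int.emod_nonneg a h5N.ne'
    have hρlt : ρ < 5 * 3 ^ m := Int.emod_lt_of_pos a h5N
    have hρne : ρ ≠ 0 := by
      intro h0
      have : (5 * 3 ^ m : ℤ) ∣ a := Int.dvd_of_emod_eq_zero h0
      exact five_not_dvd_A m K r (dvd_trans ⟨3 ^ m, rfl⟩ this)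
    have hρ1 : (1:ℤ) ≤ ρ := by omega
    have hρoneR : (1:ℝ) ≤ (ρ:ℝ) := by exact_mod_cast hρ1
    have hρltR : (ρ:ℝ) ≤ 5 * 3 ^ m - 1 := by
      have h' : ρ + 1 ≤ 5 * 3 ^ m := by omega
      have h'' : ((ρ:ℝ) + 1) ≤ ((5 * 3 ^ m : ℤ) : ℝ) := by exact_mod_cast h'
      push_cast at h''
      linarith
    refine ⟨((ρ:ℝ) - 5 * 3 ^ m) / (5 * b), ⟨-(a / (5 * 3 ^ m)) - 1, ?_⟩, ?_, ?_⟩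
    · -- grid equation
      have hdiv : (5 * 3 ^ m : ℤ) * (a / (5 * 3 ^ m)) + ρ = a := Int.mul_ediv_add_emod a _
      have hdivR : (5:ℝ) * 3 ^ m * ((a / (5 * 3 ^ m) : ℤ) : ℝ) + (ρ:ℝ) = (a:ℝ) := by
        exact_mod_cast hdiv
      have hb5 : (5:ℝ) * b ≠ 0 := by positivity
      field_simp
      push_cast
      linear_combination ((2:ℝ) ^ K) * hdivR
    · -- c ≤ -M
      rw [div_le_iff₀ (by positivity)]
      nlinarith
    · -- M < c + side
      have hside : side m K = 3 ^ m / b := by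
        rw [side, hbdef, zpow_neg]
        field_simp
      rw [hside]
      rw [show ((ρ:ℝ) - 5 * 3 ^ m) / (5 * b) + 3 ^ m / b = (ρ:ℝ) / (5 * b) by field_simp; ring]
      rw [lt_div_iff₀ (by positivity)]
      nlinarith
  choose c hgrid hlow hhigh using key
  exact ⟨⟨fun i => c (t i), side m K, side_pos m K⟩, ⟨rfl, fun i => hgrid (t i)⟩,
    fun i => ⟨hlow (t i), hhigh (t i)⟩⟩

lemma exists_smallK {M : ℝ} (hM : 0 ≤ M) (k0 : ℤ) :
    ∃ K : ℤ, K ≤ k0 ∧ (2:ℝ) ^ K * (5 * M + 1) ≤ 1 := by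
  obtain ⟨L, hL⟩ := pow_unbounded_of_one_lt (5 * M + 1) (by norm_num : (1:ℝ) < 2)
  refine ⟨min k0 (-(L:ℤ)), min_le_left _ _, ?_⟩
  have h1 : (2:ℝ) ^ (min k0 (-(L:ℤ))) ≤ (2:ℝ) ^ (-(L:ℤ)) :=
    zpow_le_zpow_right₀ (by norm_num) (min_le_right _ _)
  have h2 : (2:ℝ) ^ (-(L:ℤ)) = ((2:ℝ) ^ L)⁻¹ := by
    rw [zpow_neg, zpow_natCast]
  have hpow : (0:ℝ) < 2 ^ L := by positivity
  have h3 : (2:ℝ) ^ (-(L:ℤ)) * (5 * M + 1) ≤ 1 := by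
    rw [h2]
    rw [inv_mul_le_iff₀ hpow]
    linarith
  calc (2:ℝ) ^ (min k0 (-(L:ℤ))) * (5 * M + 1) ≤ (2:ℝ) ^ (-(L:ℤ)) * (5 * M + 1) := by
        apply mul_le_mul_of_nonneg_right h1
        linarith
      _ ≤ 1 := h3

lemma mem_D {t : Fin n → Fin (3 ^ m)} {k : ℤ} {Q : Cube n} (h : Mem m t k Q) : Q ∈ D m t := ⟨k, h⟩

lemma descend_of_le {t : Fin n → Fin (3 ^ m)} {k K : ℤ} (hkK : K ≤ k) {Q P : Cube n}
    (hQ : Mem m t k Q) (hP : Mem m t K P)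
    (h : ∀ i, P.corner i ≤ Q.corner i ∧ Q.corner i < P.corner i + P.side) : Q.IsDescendant P := by
  have e : k - ((k - K).toNat : ℤ) = K := by omega
  exact descend m (k - K).toNat hQ (by rwa [e]) h

lemma isLattice (t : Fin n → Fin (3 ^ m)) : IsDyadicLattice (D m t) := by
  refine ⟨?_, ?_, ?_⟩
  · rintro Q ⟨k, hk⟩ Q' hc
    exact ⟨k + 1, child_mem m hk hc⟩
  · rintro Q ⟨k, hk⟩ Q' ⟨k', hk'⟩
    set M : ℝ := max (max ‖Q.corner‖ ‖Q'.corner‖) 0 with hM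
    have hM0 : 0 ≤ M := le_max_right _ _
    obtain ⟨K, hKle, hKsmall⟩ := exists_smallK hM0 (min k k')
    obtain ⟨P, hPmem, hPbound⟩ := bigcube m t hM0 hKsmall
    have hQbound : ∀ i, P.corner i ≤ Q.corner i ∧ Q.corner i < P.corner i + P.side := by
      intro i
      have habs : |Q.corner i| ≤ M := by
        calc |Q.corner i| = ‖Q.corner i‖ := (Real.norm_eq_abs _).symm
          _ ≤ ‖Q.corner‖ := norm_le_pi_norm Q.corner i
          _ ≤ M := le_trans (le_max_left _ _) (le_max_left _ _)
      obtain ⟨h1, h2⟩ := abs_le.mp habs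
      have hb := hPbound i
      rw [hPmem.1]
      exact ⟨le_trans hb.1 h1, lt_of_le_of_lt h2 hb.2⟩
    have hQ'bound : ∀ i, P.corner i ≤ Q'.corner i ∧ Q'.corner i < P.corner i + P.side := by
      intro i
      have habs : |Q'.corner i| ≤ M := by
        calc |Q'.corner i| = ‖Q'.corner i‖ := (Real.norm_eq_abs _).symm
          _ ≤ ‖Q'.corner‖ := norm_le_pi_norm Q'.corner i
          _ ≤ M := le_trans (le_max_right _ _) (le_max_left _ _)
      obtain ⟨h1, h2⟩ := abs_le.mp habs
      have hb := hPbound i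
      rw [hPmem.1]
      exact ⟨le_trans hb.1 h1, lt_of_le_of_lt h2 hb.2⟩
    exact ⟨P, mem_D m hPmem,
      descend_of_le m (le_trans hKle (min_le_left _ _)) hk hPmem hQbound,
      descend_of_le m (le_trans hKle (min_le_right _ _)) hk' hPmem hQ'bound⟩
  · intro S hS
    obtain ⟨r0, hr0⟩ := hS.isBounded.subset_closedBall 0
    set M : ℝ := max r0 0 with hM
    have hM0 : 0 ≤ M := le_max_right _ _
    obtain ⟨K, _, hKsmall⟩ := exists_smallK hM0 0
    obtain ⟨P, hPmem, hPbound⟩ := bigcube m t hM0 hKsmall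
    refine ⟨P, mem_D m hPmem, fun x hx => ?_⟩
    intro i
    have hxball := hr0 hx
    rw [Metric.mem_closedBall, dist_zero_right] at hxball
    have habs : |x i| ≤ M := by
      calc |x i| = ‖x i‖ := (Real.norm_eq_abs _).symm
        _ ≤ ‖x‖ := norm_le_pi_norm x i
        _ ≤ M := le_trans hxball (le_max_left _ _)
    obtain ⟨h1, h2⟩ := abs_le.mp habs
    have hb := hPbound i
    rw [hPmem.1]
    exact ⟨le_trans hb.1 h1, lt_of_le_of_lt h2 hb.2⟩

/-- recover the lattice index from the integer coordinate of a gridline. -/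
def resOf (k : ℤ) (y : ℤ) : Fin (3 ^ m) :=
  ⟨((((u m ^ k)⁻¹ : (ZMod (3 ^ m))ˣ) : ZMod (3 ^ m)) * (y : ZMod (3 ^ m))).val,
    ZMod.val_lt _⟩

lemma resOf_nu (k : ℤ) (r : Fin (3 ^ m)) (z : ℤ) :
    resOf m k ((nu m k r : ℤ) + 3 ^ m * z) = r := by
  have hcast : (((nu m k r : ℤ) + 3 ^ m * z : ℤ) : ZMod (3 ^ m)) =
      ((u m ^ k : (ZMod (3 ^ m))ˣ) : ZMod (3 ^ m)) * ((r : ℕ) : ZMod (3 ^ m)) := by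
    push_cast
    rw [nu_cast]
    have h0 : ((3:ZMod (3 ^ m)) ^ m) = 0 := by
      have : (((3 ^ m : ℕ)) : ZMod (3 ^ m)) = 0 := ZMod.natCast_self _
      push_cast at this
      exact this
    rw [h0]
    ring
  apply Fin.ext
  show (_ : ZMod (3 ^ m)).val = (r : ℕ)
  rw [hcast, Units.inv_mul_cancel_left]
  exact ZMod.val_cast_of_lt r.isLt

lemma bad_residue {k : ℤ} {r : Fin (3 ^ m)} {x a s : ℝ}
    (hg : grid m k r x) (h1 : a < x) (h2 : x < a + s) (hs : (2:ℝ) ^ k * s ≤ 2) :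
    ∃ c : ℤ, (c = 1 ∨ c = 2) ∧
      r = resOf m k (⌊(2:ℝ) ^ k * a - (Pk m k : ℝ) / 5⌋ + c) := by
  obtain ⟨z, hz⟩ := hg
  set y : ℤ := (nu m k r : ℤ) + 3 ^ m * z with hy
  have hyR : (y:ℝ) = (2:ℝ) ^ k * x - (Pk m k : ℝ) / 5 := by
    have hA : (A m k r : ℝ) = (Pk m k : ℝ) + 5 * (nu m k r : ℝ) := by
      rw [A]; push_cast; ring
    rw [hA] at hz
    rw [hy]
    push_cast
    linarith
  set lo : ℝ := (2:ℝ) ^ k * a - (Pk m k : ℝ) / 5 with hlo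
  have hb := two_zpow_pos k
  have hylo : lo < (y:ℝ) := by
    rw [hyR, hlo]
    have : (2:ℝ) ^ k * a < 2 ^ k * x := by nlinarith
    linarith
  have hyhi : (y:ℝ) < lo + 2 := by
    rw [hyR, hlo]
    have hxa : x - a < s := by linarith
    have : (2:ℝ) ^ k * x - 2 ^ k * a < 2 ^ k * s := by nlinarith
    linarith
  have hfl : ⌊lo⌋ + 1 ≤ y := by
    have : ⌊lo⌋ < y := Int.floor_lt.mpr hylo
    omega
  have hfh : y ≤ ⌊lo⌋ + 2 := by
    have hlt : (y:ℝ) < (⌊lo⌋:ℝ) + 1 + 2 := lt_of_lt_of_le hyhi (by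
      have := Int.lt_floor_add_one lo
      linarith)
    have h3' : (y:ℝ) < ((⌊lo⌋ + 3 : ℤ) : ℝ) := by push_cast; linarith
    have : y < ⌊lo⌋ + 3 := by exact_mod_cast h3'
    omega
  have hres : r = resOf m k y := (resOf_nu m k r z).symm
  rcases (by omega : y = ⌊lo⌋ + 1 ∨ y = ⌊lo⌋ + 2) with he | he
  · exact ⟨1, Or.inl rfl, by rw [hres, he]⟩
  · exact ⟨2, Or.inr rfl, by rw [hres, he]⟩

lemma volume_toSet (Q : Cube n) :
    volume Q.toSet = (ENNReal.ofReal Q.side) ^ n := by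
  have hset : Q.toSet = Set.univ.pi fun i => Set.Ico (Q.corner i) (Q.corner i + Q.side) := by
    ext y
    simp [Cube.toSet, Set.mem_univ_pi]
  rw [hset, volume_pi_pi]
  simp only [Real.volume_Ico, add_sub_cancel_left]
  rw [Finset.prod_const, Finset.card_univ, Fintype.card_fin]

lemma two_m_lt (m : ℕ) : 2 * m < 3 ^ m := by
  induction m with
  | zero => norm_num
  | succ j ih =>
    have h3 : (1:ℕ) ≤ 3 ^ j := Nat.one_le_pow _ _ (by norm_num)
    rw [pow_succ]
    linarith

end TLat
end

theorem three_lattice_corollary {n : ℕ} (m : ℕ) (hm : 1 ≤ m) :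
    ∃ Ds : Fin (3 ^ (m * n)) → Set (Cube n),
      (∀ i, IsDyadicLattice (Ds i)) ∧
      ∀ Q : Fin m → Cube n, ∃ i, ∃ R : Fin m → Cube n, ∀ k,
        R k ∈ Ds i ∧ (Q k).toSet ⊆ (R k).toSet ∧
        volume (R k).toSet ≤ 3 ^ (m * n) * volume (Q k).toSet := by
  classical
  have epow : 3 ^ (m * n) = (3 ^ m) ^ n := pow_mul 3 m n
  let e : Fin (3 ^ (m * n)) ≃ (Fin n → Fin (3 ^ m)) :=
    (finCongr epow).trans finFunctionFinEquiv.symm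
  refine ⟨fun i => TLat.D m (e i), fun i => TLat.isLattice m (e i), ?_⟩
  intro Q
  -- choose scales
  have hscale : ∀ l : Fin m, ∃ k : ℤ,
      (2:ℝ) ^ (-k) ≤ (Q l).side ∧ (2:ℝ) ^ k * (Q l).side < 2 := by
    intro l
    obtain ⟨j, hj⟩ := exists_mem_Ico_zpow (Q l).side_pos (by norm_num : (1:ℝ) < 2)
    refine ⟨-j, by simpa using hj.1, ?_⟩
    have h2 := hj.2
    have hb := TLat.two_zpow_pos (-j)
    have hmul : (2:ℝ) ^ (j+1) = 2 * 2 ^ j := by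
      rw [zpow_add_one₀ (by norm_num : (2:ℝ) ≠ 0)]; ring
    rw [Set.mem_Ico] at hj
    have h2' : (Q l).side < 2 * 2 ^ j := by rw [← hmul]; exact hj.2
    have h1 : (2:ℝ) ^ (-j) * (2:ℝ) ^ j = 1 := by
      rw [← zpow_add₀ (by norm_num : (2:ℝ) ≠ 0)]; simp
    calc (2:ℝ) ^ (-j) * (Q l).side < 2 ^ (-j) * (2 * 2 ^ j) := by nlinarith
      _ = 2 * ((2:ℝ) ^ (-j) * 2 ^ j) := by ring
      _ = 2 := by rw [h1]; ring
  choose k hk1 hk2 using hscale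
  -- bad residues
  let F : Fin n → Finset (Fin (3 ^ m)) := fun i =>
    Finset.image (fun p : Fin m × Bool =>
      TLat.resOf m (k p.1)
        (⌊(2:ℝ) ^ (k p.1) * (Q p.1).corner i - (TLat.Pk m (k p.1) : ℝ) / 5⌋
          + (if p.2 then 1 else 2))) Finset.univ
  have hFcard : ∀ i, (F i).card < 3 ^ m := by
    intro i
    calc (F i).card ≤ (Finset.univ : Finset (Fin m × Bool)).card := Finset.card_image_le
      _ = m * 2 := by simp [Finset.card_univ]
      _ < 3 ^ m := by have := TLat.two_m_lt m; omega
  have hchoice : ∀ i : Fin n, ∃ r : Fin (3 ^ m), r ∉ F i := by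
    intro i
    by_contra hcon
    push_neg at hcon
    have hsub : (Finset.univ : Finset (Fin (3 ^ m))) ⊆ F i := fun r _ => hcon r
    have hcard := Finset.card_le_card hsub
    rw [Finset.card_univ, Fintype.card_fin] at hcard
    exact absurd (lt_of_le_of_lt hcard (hFcard i)) (lt_irrefl _)
  choose t ht using hchoice
  -- construct the covering cubes
  have hcubes : ∀ l : Fin m, ∃ Rl : Cube n, TLat.Mem m t (k l) Rl ∧
      ∀ i, Rl.corner i ≤ (Q l).corner i ∧
        (Q l).corner i + (Q l).side ≤ Rl.corner i + TLat.side m (k l) := by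
    intro l
    have hper : ∀ i : Fin n, ∃ c : ℝ, TLat.grid m (k l) (t i) c ∧ c ≤ (Q l).corner i ∧
        (Q l).corner i + (Q l).side ≤ c + TLat.side m (k l) := by
      intro i
      have hb := TLat.two_zpow_pos (k l)
      have h5N : (0:ℝ) < 5 * 3 ^ m := by positivity
      set zf := ⌊(5 * (2:ℝ) ^ (k l) * (Q l).corner i - (TLat.A m (k l) (t i) : ℝ)) /
        (5 * 3 ^ m)⌋ with hzf
      have hfl : (zf:ℝ) * (5 * 3 ^ m) ≤
          5 * (2:ℝ) ^ (k l) * (Q l).corner i - (TLat.A m (k l) (t i) : ℝ) := by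
        have := Int.floor_le ((5 * (2:ℝ) ^ (k l) * (Q l).corner i -
          (TLat.A m (k l) (t i) : ℝ)) / (5 * 3 ^ m))
        rw [← hzf] at this
        calc (zf:ℝ) * (5 * 3 ^ m) ≤ ((5 * (2:ℝ) ^ (k l) * (Q l).corner i -
            (TLat.A m (k l) (t i) : ℝ)) / (5 * 3 ^ m)) * (5 * 3 ^ m) := by nlinarith
          _ = _ := by field_simp
      have hfl2 : 5 * (2:ℝ) ^ (k l) * (Q l).corner i - (TLat.A m (k l) (t i) : ℝ) <
          ((zf:ℝ) + 1) * (5 * 3 ^ m) := by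
        have := Int.lt_floor_add_one ((5 * (2:ℝ) ^ (k l) * (Q l).corner i -
          (TLat.A m (k l) (t i) : ℝ)) / (5 * 3 ^ m))
        rw [← hzf] at this
        calc 5 * (2:ℝ) ^ (k l) * (Q l).corner i - (TLat.A m (k l) (t i) : ℝ)
            = ((5 * (2:ℝ) ^ (k l) * (Q l).corner i - (TLat.A m (k l) (t i) : ℝ)) /
              (5 * 3 ^ m)) * (5 * 3 ^ m) := by field_simp
          _ < ((zf:ℝ) + 1) * (5 * 3 ^ m) := by nlinarith
      set c : ℝ := ((TLat.A m (k l) (t i) : ℝ) + 5 * 3 ^ m * zf) / (5 * (2:ℝ) ^ (k l))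
        with hcdef
      have hgrid : TLat.grid m (k l) (t i) c := by
        refine ⟨zf, ?_⟩
        rw [hcdef]
        field_simp
      have hcle : c ≤ (Q l).corner i := by
        rw [hcdef, div_le_iff₀ (by positivity)]
        nlinarith
      have hsideb : TLat.side m (k l) = 3 ^ m / (2:ℝ) ^ (k l) := by
        rw [TLat.side, zpow_neg]
        field_simp
      have hnext : (Q l).corner i < c + TLat.side m (k l) := by
        rw [hcdef, hsideb]
        rw [show ((TLat.A m (k l) (t i) : ℝ) + 5 * 3 ^ m * zf) / (5 * (2:ℝ) ^ (k l)) +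
          3 ^ m / (2:ℝ) ^ (k l) =
          ((TLat.A m (k l) (t i) : ℝ) + 5 * 3 ^ m * zf + 5 * 3 ^ m) / (5 * (2:ℝ) ^ (k l)) by
            field_simp]
        rw [lt_div_iff₀ (by positivity)]
        nlinarith
      refine ⟨c, hgrid, hcle, ?_⟩
      by_contra hcon
      push_neg at hcon
      have hgrid2 : TLat.grid m (k l) (t i) (c + TLat.side m (k l)) := by
        have := TLat.grid_shift m hgrid 1
        simpa using this
      obtain ⟨cc, hcc, heq⟩ := TLat.bad_residue m hgrid2 hnext hcon (le_of_lt (hk2 l))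
      apply ht i
      have hmem : TLat.resOf m (k l)
          (⌊(2:ℝ) ^ (k l) * (Q l).corner i - (TLat.Pk m (k l) : ℝ) / 5⌋ + cc) ∈ F i := by
        rcases hcc with h1 | h2
        · refine Finset.mem_image.mpr ⟨(l, true), Finset.mem_univ _, ?_⟩
          simp [h1]
        · refine Finset.mem_image.mpr ⟨(l, false), Finset.mem_univ _, ?_⟩
          simp [h2]
      rwa [← heq] at hmem
    choose c hgrid hle hcov using hper
    exact ⟨⟨fun i => c i, TLat.side m (k l), TLat.side_pos m _⟩, ⟨rfl, hgrid⟩,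
      fun i => ⟨hle i, hcov i⟩⟩
  choose R hRmem hRbound using hcubes
  refine ⟨e.symm t, R, fun l => ⟨?_, ?_, ?_⟩⟩
  · show R l ∈ TLat.D m (e (e.symm t))
    rw [Equiv.apply_symm_apply]
    exact TLat.mem_D m (hRmem l)
  · intro y hy
    intro i
    have hb := hRbound l i
    have hyi := hy i
    have hside : (R l).side = TLat.side m (k l) := (hRmem l).1
    constructor
    · linarith [hb.1, hyi.1]
    · rw [hside]
      linarith [hb.2, hyi.2]
  · rw [TLat.volume_toSet, TLat.volume_toSet]
    have hside : (R l).side = TLat.side m (k l) := (hRmem l).1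
    rw [hside]
    have hsle : TLat.side m (k l) ≤ 3 ^ m * (Q l).side := by
      rw [TLat.side]
      have h1 := hk1 l
      have h3 : (0:ℝ) < (3:ℝ) ^ m := by positivity
      nlinarith
    have h1 : ENNReal.ofReal (TLat.side m (k l)) ≤ ENNReal.ofReal ((3:ℝ) ^ m * (Q l).side) :=
      ENNReal.ofReal_le_ofReal hsle
    have h2 : ENNReal.ofReal ((3:ℝ) ^ m * (Q l).side) =
        (3:ℝ≥0∞) ^ m * ENNReal.ofReal ((Q l).side) := by
      rw [ENNReal.ofReal_mul (by positivity)]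
      congr 1
      rw [ENNReal.ofReal_pow (by norm_num : (0:ℝ) ≤ 3)]
      norm_num
    calc (ENNReal.ofReal (TLat.side m (k l))) ^ n
        ≤ ((3:ℝ≥0∞) ^ m * ENNReal.ofReal ((Q l).side)) ^ n := by
          exact pow_le_pow_left₀ zero_le (h1.trans_eq h2) n
      _ = (3:ℝ≥0∞) ^ (m * n) * (ENNReal.ofReal ((Q l).side)) ^ n := by
          rw [mul_pow, ← pow_mul]
      _ = 3 ^ (m * n) * (ENNReal.ofReal ((Q l).side)) ^ n := rfl
end

section
/- Let D be a dyadic lattice, Q ∈ D, and P a boolean condition on pairs of nested cubes with P(Q',Q') always true. Let stop(Q,P) be the family of stopping cubes: all cubes reachable from Q by finitely many one-step moves, where Q' is reachable in one step from R if Q' ⊂ R, P(R,Q') fails, and P(R,Q'') holds for all Q'' with Q' ⊊ Q'' ⊂ R. Then every dyadic subcube R ⊆ Q has a well-defined roof R̂ (the smallest cube of stop(Q,P) containing R), and P(R̂, R) holds. -/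
open MeasureTheory Set
open scoped ENNReal Classical

/-- `Q'` can be reached from `R` in one stopping step with respect to `P`. -/
def stopStep {n : ℕ} (D : Set (Cube n)) (P : Cube n → Cube n → Prop)
    (Q' R : Cube n) : Prop :=
  Q' ∈ D ∧ Q'.toSet ⊆ R.toSet ∧ ¬P R Q' ∧
    ∀ Q'' ∈ D, Q'.toSet ⊂ Q''.toSet → Q''.toSet ⊆ R.toSet → P R Q''

/-- The family `stop(Q, P)` of cubes reachable from `Q` in finitely many stopping steps. -/
def stopFamily {n : ℕ} (D : Set (Cube n)) (P : Cube n → Cube n → Prop)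
    (Q : Cube n) : Set (Cube n) :=
  {R : Cube n | Relation.ReflTransGen (stopStep D P) R Q}

namespace Cube

lemma cube_ext {n : ℕ} {A B : Cube n} (hc : A.corner = B.corner)
    (hs : A.side = B.side) : A = B := by
  cases A; cases B; simp_all

lemma corner_mem {n : ℕ} (A : Cube n) : A.corner ∈ A.toSet :=
  fun i => ⟨le_refl _, by linarith [A.side_pos]⟩

lemma toSet_nonempty {n : ℕ} (A : Cube n) : A.toSet.Nonempty := ⟨_, A.corner_mem⟩

lemma child_subset {n : ℕ} {A B : Cube n} (h : A.IsChild B) : A.toSet ⊆ B.toSet := by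
  obtain ⟨hs, ε, hc⟩ := h
  intro y hy i
  obtain ⟨h1, h2⟩ := hy i
  rw [hc] at h1 h2
  rw [hs] at h2
  have := B.side_pos
  simp only at h1 h2
  constructor
  · refine le_trans ?_ h1
    split <;> linarith
  · refine lt_of_lt_of_le ?_ (by linarith : B.corner i + B.side/2 + B.side/2 ≤ B.corner i + B.side)
    refine lt_of_lt_of_le h2 ?_
    gcongr
    split <;> linarith

lemma desc_subset {n : ℕ} {A B : Cube n} (h : A.IsDescendant B) : A.toSet ⊆ B.toSet := by
  induction h with
  | refl => exact le_refl _
  | tail _ hstep ih => exact le_trans ih (child_subset hstep)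

lemma desc_pow {n : ℕ} {A B : Cube n} (h : A.IsDescendant B) :
    ∃ k : ℕ, B.side = A.side * 2 ^ k := by
  induction h with
  | refl => exact ⟨0, by simp⟩
  | tail _ hstep ih =>
    obtain ⟨k, hk⟩ := ih
    exact ⟨k + 1, by rw [hstep.1] at hk; rw [pow_succ]; linarith⟩

lemma desc_side_le {n : ℕ} {A B : Cube n} (h : A.IsDescendant B) : A.side ≤ B.side := by
  obtain ⟨k, hk⟩ := desc_pow h
  have h1 : (1:ℝ) ≤ 2 ^ k := one_le_pow₀ (by norm_num)
  nlinarith [A.side_pos]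

lemma desc_side_lt {n : ℕ} {A B : Cube n} (h : A.IsDescendant B) (hne : A ≠ B) :
    A.side < B.side := by
  rcases Relation.ReflTransGen.cases_tail h with rfl | ⟨c, hAc, hcB⟩
  · exact absurd rfl hne
  · have h1 := desc_side_le hAc
    have h2 := hcB.1
    have := B.side_pos
    linarith

lemma desc_side_eq {n : ℕ} {A B : Cube n} (h : A.IsDescendant B) (hs : A.side = B.side) :
    A = B := by
  by_contra hne
  exact absurd hs (ne_of_lt (desc_side_lt h hne))

lemma children_eq {n : ℕ} {A B Q : Cube n} (hA : A.IsChild Q) (hB : B.IsChild Q)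
    (h : (A.toSet ∩ B.toSet).Nonempty) : A = B := by
  obtain ⟨x, hxA, hxB⟩ := h
  obtain ⟨hsA, εA, hcA⟩ := hA
  obtain ⟨hsB, εB, hcB⟩ := hB
  have hε : εA = εB := by
    funext i
    by_contra hne
    have h1 := hxA i; have h2 := hxB i
    rw [hcA] at h1; rw [hcB] at h2
    simp only at h1 h2
    rw [hsA] at h1; rw [hsB] at h2
    have hs := Q.side_pos
    cases hb : εA i <;> cases hb2 : εB i <;> simp [hb, hb2] at hne h1 h2 <;> linarith
  refine cube_ext ?_ (by rw [hsA, hsB])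
  rw [hcA, hcB, hε]

lemma toSet_inj {n : ℕ} (hn : 0 < n) {A B : Cube n} (h : A.toSet = B.toSet) : A = B := by
  have key : ∀ C E : Cube n, C.toSet ⊆ E.toSet →
      (∀ i, E.corner i ≤ C.corner i) ∧ C.side ≤ E.side := by
    intro C E hCE
    have hc : ∀ i, E.corner i ≤ C.corner i := fun i =>
      (hCE (fun i => ⟨le_refl _, by linarith [C.side_pos]⟩) i).1
    refine ⟨hc, ?_⟩
    by_contra hlt
    push_neg at hlt
    set i : Fin n := ⟨0, hn⟩
    have hp : (fun j => C.corner j + (if j = i then E.side else 0)) ∈ C.toSet := by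
      intro j
      simp only
      constructor
      · split <;> linarith [E.side_pos]
      · split <;> linarith [C.side_pos]
    have := (hCE hp i).2
    simp at this
    linarith [hc i]
  have h1 := key A B h.le
  have h2 := key B A h.ge
  exact cube_ext (funext fun i => le_antisymm (h2.1 i) (h1.1 i)) (le_antisymm h1.2 h2.2)

lemma nested {n : ℕ} {A B Q : Cube n} (hA : A.IsDescendant Q) (hB : B.IsDescendant Q)
    (h : (A.toSet ∩ B.toSet).Nonempty) : A.IsDescendant B ∨ B.IsDescendant A := by
  revert h
  induction hA using Relation.ReflTransGen.head_induction_on with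
  | refl => exact fun _ => Or.inr hB
  | head hstep htail ih =>
    rename_i A c
    intro h
    obtain ⟨x, hxA, hxB⟩ := h
    rcases ih ⟨x, child_subset hstep hxA, hxB⟩ with hcB | hBc
    · exact Or.inl (Relation.ReflTransGen.head hstep hcB)
    · rcases Relation.ReflTransGen.cases_tail hBc with rfl | ⟨d, hBd, hdc⟩
      · exact Or.inl (Relation.ReflTransGen.single hstep)
      · have : A = d := children_eq hstep hdc ⟨x, hxA, desc_subset hBd hxB⟩
        exact Or.inr (this ▸ hBd)

end Cube

open Cube

lemma lattice_comp {n : ℕ} {D : Set (Cube n)} (hD : IsDyadicLattice D)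
    {A B : Cube n} (hA : A ∈ D) (hB : B ∈ D) (h : (A.toSet ∩ B.toSet).Nonempty) :
    A.IsDescendant B ∨ B.IsDescendant A := by
  obtain ⟨W, _, hAW, hBW⟩ := hD.2.1 A hA B hB
  exact nested hAW hBW h

lemma subset_desc {n : ℕ} (hn : 0 < n) {D : Set (Cube n)} (hD : IsDyadicLattice D)
    {A B : Cube n} (hA : A ∈ D) (hB : B ∈ D) (h : A.toSet ⊆ B.toSet) :
    A.IsDescendant B := by
  rcases lattice_comp hD hA hB (A.toSet_nonempty.mono (subset_inter (le_refl _) h)) with hd | hd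
  · exact hd
  · have : B = A := toSet_inj hn (le_antisymm (desc_subset hd) h)
    exact this ▸ Relation.ReflTransGen.refl

lemma stopFamily_subset {n : ℕ} {D : Set (Cube n)} {P : Cube n → Cube n → Prop}
    {U W : Cube n} (h : U ∈ stopFamily D P W) : U.toSet ⊆ W.toSet := by
  induction h with
  | refl => exact le_refl _
  | tail _ hstep ih => exact le_trans ih hstep.2.1

lemma stopping_roof_aux {n : ℕ} (hn : 0 < n) (D : Set (Cube n)) (hD : IsDyadicLattice D)
    (P : Cube n → Cube n → Prop) (hP : ∀ Q' : Cube n, P Q' Q') :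
    ∀ k : ℕ, ∀ Q ∈ D, ∀ R ∈ D, R.IsDescendant Q → Q.side = R.side * 2 ^ k →
      ∃ Rhat ∈ stopFamily D P Q, R.toSet ⊆ Rhat.toSet ∧
        (∀ U ∈ stopFamily D P Q, R.toSet ⊆ U.toSet → Rhat.toSet ⊆ U.toSet) ∧
        P Rhat R := by
  intro k
  induction k using Nat.strong_induction_on with
  | _ k ih =>
  intro Q hQ R hR hdesc hside
  set S : Set (Cube n) :=
    {c | c ∈ D ∧ R.toSet ⊆ c.toSet ∧ c.toSet ⊆ Q.toSet ∧ ¬P Q c} with hSdef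
  by_cases hS : S.Nonempty
  · -- there is a "bad" cube; pick a maximal one
    set T : Set ℕ := {m | ∃ c ∈ S, Q.side = c.side * 2 ^ m} with hTdef
    have hTne : T.Nonempty := by
      obtain ⟨c, hc⟩ := hS
      obtain ⟨m, hm⟩ := desc_pow (subset_desc hn hD hc.1 hQ hc.2.2.1)
      exact ⟨m, c, hc, hm⟩
    obtain ⟨Q', hQ'S, hQ'side⟩ : ∃ c ∈ S, Q.side = c.side * 2 ^ sInf T := Nat.sInf_mem hTne
    obtain ⟨hQ'D, hRQ', hQ'Q, hQ'P⟩ := hQ'S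
    -- maximality of Q' in S
    have hmax : ∀ c ∈ S, c.toSet ⊆ Q'.toSet := by
      intro c hc
      obtain ⟨mc, hmc⟩ := desc_pow (subset_desc hn hD hc.1 hQ hc.2.2.1)
      have hmle : sInf T ≤ mc := Nat.sInf_le ⟨c, hc, hmc⟩
      have hcside : c.side ≤ Q'.side := by
        have h2 : (2:ℝ) ^ sInf T ≤ 2 ^ mc := by
          apply pow_le_pow_right₀ (by norm_num) hmle
        have hq := Q'.side_pos
        have hc2 : c.side * 2 ^ mc = Q'.side * 2 ^ sInf T := by rw [← hmc, hQ'side]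
        nlinarith [c.side_pos, pow_pos (by norm_num : (0:ℝ) < 2) mc,
          pow_pos (by norm_num : (0:ℝ) < 2) (sInf T)]
      rcases lattice_comp hD hc.1 hQ'D
          (R.toSet_nonempty.mono (subset_inter hc.2.1 hRQ')) with hd | hd
      · exact desc_subset hd
      · have : Q' = c := desc_side_eq hd (le_antisymm (desc_side_le hd) hcside)
        exact this ▸ le_refl _
    -- Q' is a one-step stopping cube
    have hstep : stopStep D P Q' Q := by
      refine ⟨hQ'D, hQ'Q, hQ'P, fun Q'' hQ'' hlt hsub => ?_⟩
      by_contra hnP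
      exact hlt.2 (hmax Q'' ⟨hQ'', le_trans hRQ' hlt.1, hsub, hnP⟩)
    -- recurse inside Q'
    have hRdescQ' : R.IsDescendant Q' := subset_desc hn hD hR hQ'D hRQ'
    obtain ⟨k', hk'⟩ := desc_pow hRdescQ'
    have hQ'ne : Q' ≠ Q := fun h => hQ'P (h ▸ hP Q)
    have hQ'desc : Q'.IsDescendant Q := subset_desc hn hD hQ'D hQ hQ'Q
    have hm1 : 1 ≤ sInf T := by
      rcases Nat.eq_zero_or_pos (sInf T) with h0 | h1
      · exfalso
        apply hQ'ne
        apply desc_side_eq hQ'desc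
        rw [hQ'side, h0]; ring
      · exact h1
    have hkeq : k = k' + sInf T := by
      have h1 : R.side * 2 ^ k = R.side * 2 ^ (k' + sInf T) := by
        rw [← hside, hQ'side, hk', pow_add]; ring
      have h2 : (2:ℝ) ^ k = 2 ^ (k' + sInf T) :=
        mul_left_cancel₀ (ne_of_gt R.side_pos) h1
      have h3 : (2:ℕ) ^ k = 2 ^ (k' + sInf T) := by exact_mod_cast h2
      exact Nat.pow_right_injective (le_refl 2) h3
    have hk'lt : k' < k := by omega
    obtain ⟨Rhat, hRhatMem, hRRhat, hRhatMin, hRhatP⟩ :=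
      ih k' hk'lt Q' hQ'D R hR hRdescQ' hk'
    refine ⟨Rhat, hRhatMem.tail hstep, hRRhat, ?_, hRhatP⟩
    intro U hU hRU
    rcases Relation.ReflTransGen.cases_tail hU with rfl | ⟨c, hUc, hcstep⟩
    · exact le_trans (stopFamily_subset hRhatMem) hQ'Q
    · -- the first stopping cube above U must be Q'
      have hcS : c ∈ S :=
        ⟨hcstep.1, le_trans hRU (stopFamily_subset hUc), hcstep.2.1, hcstep.2.2.1⟩
      have hcQ' : c.toSet ⊆ Q'.toSet := hmax c hcS
      have hceq : c = Q' := by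
        apply toSet_inj hn
        by_contra hne
        exact hQ'P (hcstep.2.2.2 Q' hQ'D ⟨hcQ', fun h => hne (le_antisymm hcQ' h)⟩ hQ'Q)
      exact hRhatMin U (hceq ▸ hUc) hRU
  · -- no bad cube: Q itself is the roof
    refine ⟨Q, Relation.ReflTransGen.refl, desc_subset hdesc, ?_, ?_⟩
    · intro U hU hRU
      rcases Relation.ReflTransGen.cases_tail hU with rfl | ⟨c, hUc, hcstep⟩
      · exact le_refl _
      · exact absurd ⟨hcstep.1, le_trans hRU (stopFamily_subset hUc),
          hcstep.2.1, hcstep.2.2.1⟩ (fun h => hS ⟨c, h⟩)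
    · by_contra hnP
      exact hS ⟨R, hR, le_refl _, desc_subset hdesc, hnP⟩

theorem stopping_roof_exists {n : ℕ} (D : Set (Cube n)) (hD : IsDyadicLattice D)
    (P : Cube n → Cube n → Prop) (hP : ∀ Q' : Cube n, P Q' Q')
    (Q : Cube n) (hQ : Q ∈ D) :
    ∀ R ∈ D, R.IsDescendant Q →
      ∃ Rhat ∈ stopFamily D P Q, R.toSet ⊆ Rhat.toSet ∧
        (∀ U ∈ stopFamily D P Q, R.toSet ⊆ U.toSet → Rhat.toSet ⊆ U.toSet) ∧
        P Rhat R := by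
  intro R hR hdesc
  rcases Nat.eq_zero_or_pos n with hn | hn
  · -- dimension zero: every cube has `toSet = univ`
    subst hn
    have huniv : ∀ C : Cube 0, C.toSet = univ := fun C =>
      eq_univ_of_forall (fun y i => i.elim0)
    by_cases hPQR : P Q R
    · exact ⟨Q, Relation.ReflTransGen.refl, by rw [huniv Q]; exact subset_univ _,
        fun U _ _ => by rw [huniv U]; exact subset_univ _, hPQR⟩
    · refine ⟨R, Relation.ReflTransGen.single ⟨hR, by rw [huniv Q]; exact subset_univ _,
        hPQR, fun Q'' _ hss _ => ?_⟩, le_refl _,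
        fun U _ _ => by rw [huniv U]; exact subset_univ _, hP R⟩
      exact absurd hss (by rw [huniv R, huniv Q'']; exact fun h => h.2 (le_refl _))
  · obtain ⟨k, hk⟩ := Cube.desc_pow hdesc
    exact stopping_roof_aux hn D hD P hP k Q hQ R hR hdesc hk
end

section
/- If a family S ⊂ D contains an η-anti-Carleson stack of height M (a finite family F ⊆ D(Q) containing its top cube Q with Σ_{Q'∈F, d_F(Q,Q')=M} |Q'| ≥ η|Q|) that is contained in a Λ-Carleson family, then (M+1)η ≤ Λ. More precisely, in any η-anti-Carleson stack F of height M, for every k = 0,...,M one has Σ_{Q'∈F, d_F(Q,Q')=k}|Q'| ≥ η|Q|. -/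
open MeasureTheory Set
open scoped ENNReal Classical

namespace Cube

variable {n : ℕ}

lemma corner_mem_toSet (Q : Cube n) : Q.corner ∈ Q.toSet :=
  fun i => ⟨le_rfl, by linarith [Q.side_pos]⟩

lemma toSet_eq_pi (Q : Cube n) :
    Q.toSet = Set.pi Set.univ (fun i => Set.Ico (Q.corner i) (Q.corner i + Q.side)) := by
  ext y; simp [toSet, Set.mem_pi]

lemma measurableSet_toSet (Q : Cube n) : MeasurableSet Q.toSet := by
  rw [toSet_eq_pi]
  exact MeasurableSet.univ_pi (fun i => measurableSet_Ico)

lemma volume_toSet (Q : Cube n) :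
    volume Q.toSet = ENNReal.ofReal Q.side ^ n := by
  rw [toSet_eq_pi, volume_pi_pi]
  simp [Real.volume_Ico]

lemma volume_toSet_pos (Q : Cube n) : 0 < volume Q.toSet := by
  rw [volume_toSet]
  exact ENNReal.pow_pos (by simp [Q.side_pos]) n

lemma volume_toSet_lt_top (Q : Cube n) : volume Q.toSet < ⊤ := by
  rw [volume_toSet]
  exact ENNReal.pow_lt_top ENNReal.ofReal_lt_top

lemma IsChild.subset {Q' Q : Cube n} (h : Q'.IsChild Q) : Q'.toSet ⊆ Q.toSet := by
  obtain ⟨hs, ε, hc⟩ := h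
  intro y hy i
  have := hy i
  rw [hc, hs] at this
  have hsp := Q.side_pos
  constructor
  · rcases this with ⟨h1, _⟩
    by_cases hb : ε i <;> simp [hb] at h1 <;> linarith
  · rcases this with ⟨_, h2⟩
    by_cases hb : ε i <;> simp [hb] at h2 <;> linarith

lemma IsDescendant.subset {Q' Q : Cube n} (h : Q'.IsDescendant Q) : Q'.toSet ⊆ Q.toSet := by
  induction h with
  | refl => exact le_rfl
  | tail _ hbc ih => exact le_trans ih hbc.subset

lemma ext' {Q1 Q2 : Cube n} (hc : Q1.corner = Q2.corner) (hs : Q1.side = Q2.side) :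
    Q1 = Q2 := by
  cases Q1; cases Q2; simp_all

lemma child_eq_or_disjoint {P1 P2 Q : Cube n} (h1 : P1.IsChild Q) (h2 : P2.IsChild Q) :
    P1 = P2 ∨ Disjoint P1.toSet P2.toSet := by
  obtain ⟨hs1, ε1, hc1⟩ := h1
  obtain ⟨hs2, ε2, hc2⟩ := h2
  by_cases hε : ε1 = ε2
  · left; exact ext' (by rw [hc1, hc2, hε]) (by rw [hs1, hs2])
  · right
    obtain ⟨i, hi⟩ := Function.ne_iff.1 hε
    rw [Set.disjoint_left]
    intro y hy1 hy2
    have h1 := hy1 i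
    have h2 := hy2 i
    rw [hc1, hs1] at h1
    rw [hc2, hs2] at h2
    have hsp := Q.side_pos
    cases hb1 : ε1 i <;> cases hb2 : ε2 i <;> simp [hb1, hb2] at h1 h2 hi <;> linarith

/-- chains of given length -/
def chainN : ℕ → Cube n → Cube n → Prop
  | 0, C, Q => C = Q
  | (m+1), C, Q => ∃ P, chainN m C P ∧ P.IsChild Q

lemma chainN_subset : ∀ {m : ℕ} {C Q : Cube n}, chainN m C Q → C.toSet ⊆ Q.toSet
  | 0, _, _, h => by rw [h]
  | (m+1), C, Q, ⟨P, hCP, hPQ⟩ => le_trans (chainN_subset hCP) hPQ.subset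

lemma isDescendant_iff_chainN {C Q : Cube n} :
    C.IsDescendant Q ↔ ∃ m, chainN m C Q := by
  constructor
  · intro h
    induction h with
    | refl => exact ⟨0, rfl⟩
    | tail _ hbc ih =>
      obtain ⟨m, hm⟩ := ih
      exact ⟨m + 1, _, hm, hbc⟩
  · rintro ⟨m, hm⟩
    induction m generalizing Q with
    | zero => exact hm ▸ Relation.ReflTransGen.refl
    | succ m ih =>
      obtain ⟨P, hCP, hPQ⟩ := hm
      exact (ih hCP).tail hPQ

lemma trichotomy_aux : ∀ (m1 : ℕ) {m2 : ℕ} {C1 C2 Q : Cube n},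
    chainN m1 C1 Q → chainN m2 C2 Q →
    C1.toSet ⊆ C2.toSet ∨ C2.toSet ⊆ C1.toSet ∨ Disjoint C1.toSet C2.toSet := by
  intro m1
  induction m1 with
  | zero =>
    intro m2 C1 C2 Q h1 h2
    cases h1
    exact Or.inr (Or.inl (chainN_subset h2))
  | succ m ih =>
    intro m2 C1 C2 Q h1 h2
    obtain ⟨P1, hC1, hP1⟩ := h1
    cases m2 with
    | zero => cases h2; exact Or.inl ((chainN_subset hC1).trans hP1.subset)
    | succ m2 =>
      obtain ⟨P2, hC2, hP2⟩ := h2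
      rcases child_eq_or_disjoint hP1 hP2 with heq | hdis
      · subst heq
        exact ih hC1 hC2
      · exact Or.inr (Or.inr (hdis.mono (chainN_subset hC1) (chainN_subset hC2)))

lemma trichotomy {C1 C2 Q : Cube n} (h1 : C1.IsDescendant Q) (h2 : C2.IsDescendant Q) :
    C1.toSet ⊆ C2.toSet ∨ C2.toSet ⊆ C1.toSet ∨ Disjoint C1.toSet C2.toSet := by
  obtain ⟨m1, hm1⟩ := isDescendant_iff_chainN.1 h1
  obtain ⟨m2, hm2⟩ := isDescendant_iff_chainN.1 h2
  exact trichotomy_aux m1 hm1 hm2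

lemma toSet_injective (hn : n ≠ 0) : Function.Injective (toSet (n := n)) := by
  intro Q1 Q2 h
  have hc : Q1.corner = Q2.corner := by
    have h12 : Q1.corner ∈ Q2.toSet := h ▸ corner_mem_toSet Q1
    have h21 : Q2.corner ∈ Q1.toSet := h.symm ▸ corner_mem_toSet Q2
    funext i
    exact le_antisymm (h21 i).1 (h12 i).1
  have hs : Q1.side = Q2.side := by
    by_contra hne
    rcases lt_or_gt_of_ne hne with hlt | hlt
    · have hmem : (fun i => Q2.corner i + Q1.side) ∈ Q2.toSet := by
        intro i
        dsimp only
        constructor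
        · linarith [Q1.side_pos]
        · linarith
      rw [← h] at hmem
      have := (hmem ⟨0, Nat.pos_of_ne_zero hn⟩).2
      dsimp only at this
      rw [hc] at this
      linarith
    · have hmem : (fun i => Q1.corner i + Q2.side) ∈ Q1.toSet := by
        intro i
        dsimp only
        constructor
        · linarith [Q2.side_pos]
        · linarith
      rw [h] at hmem
      have := (hmem ⟨0, Nat.pos_of_ne_zero hn⟩).2
      dsimp only at this
      rw [← hc] at this
      linarith
  exact ext' hc hs

lemma toSet_eq_univ_of_n_eq_zero (hn : n = 0) (Q : Cube n) : Q.toSet = Set.univ := by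
  subst hn
  ext y
  constructor
  · intro _; trivial
  · intro _ i; exact i.elim0

end Cube

/-- The graph distance from the top cube `Q` down to `Q'` in the containment
graph of the finite family `F`: the number of cubes `C ∈ F` with `Q' ⊊ C ⊆ Q`. -/
noncomputable def stackDist {n : ℕ} (F : Finset (Cube n)) (Q Q' : Cube n) : ℕ :=
  (F.filter fun C => Q'.toSet ⊂ C.toSet ∧ C.toSet ⊆ Q.toSet).card

/-- An `η`-anti-Carleson stack of height `M` with top cube `Q`. -/
noncomputable def IsAntiCarlesonStack {n : ℕ} (η : ℝ) (M : ℕ) (Q : Cube n)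
    (F : Finset (Cube n)) : Prop :=
  Q ∈ F ∧ (∀ C ∈ F, C.IsDescendant Q) ∧
    ENNReal.ofReal η * volume Q.toSet ≤
      ∑ C ∈ F.filter (fun C => stackDist F Q C = M), volume C.toSet


section Stack
variable {n : ℕ}

lemma stackDist_lt {F : Finset (Cube n)} {Q C' C₀ : Cube n} (hC₀F : C₀ ∈ F)
    (h1 : C'.toSet ⊂ C₀.toSet) (h2 : C₀.toSet ⊆ Q.toSet) :
    stackDist F Q C₀ < stackDist F Q C' := by
  apply Finset.card_lt_card
  have hsub : F.filter (fun C => C₀.toSet ⊂ C.toSet ∧ C.toSet ⊆ Q.toSet) ⊆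
      F.filter (fun C => C'.toSet ⊂ C.toSet ∧ C.toSet ⊆ Q.toSet) := by
    intro C'' hC''
    simp only [Finset.mem_filter] at *
    exact ⟨hC''.1, h1.trans hC''.2.1, hC''.2.2⟩
  rw [Finset.ssubset_iff_of_subset hsub]
  refine ⟨C₀, ?_, ?_⟩
  · simp only [Finset.mem_filter]
    exact ⟨hC₀F, h1, h2⟩
  · simp only [Finset.mem_filter]
    rintro ⟨-, h, -⟩
    exact h.ne rfl

lemma level_step (F : Finset (Cube n)) (Q : Cube n)
    (hdesc : ∀ C ∈ F, C.IsDescendant Q) (k : ℕ) :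
    ∑ C ∈ F.filter (fun C => stackDist F Q C = k + 1), volume C.toSet ≤
    ∑ C ∈ F.filter (fun C => stackDist F Q C = k), volume C.toSet := by
  by_cases hn : n = 0
  · have he : F.filter (fun C => stackDist F Q C = k + 1) = ∅ := by
      rw [Finset.filter_eq_empty_iff]
      intro C _ hCk
      have h0 : stackDist F Q C = 0 := by
        rw [stackDist, Finset.card_eq_zero, Finset.filter_eq_empty_iff]
        intro C' _ h
        rw [Cube.toSet_eq_univ_of_n_eq_zero hn C, Cube.toSet_eq_univ_of_n_eq_zero hn C'] at h
        exact absurd h.1 (lt_irrefl _)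
      omega
    simp [he]
  · set A := F.filter (fun C => stackDist F Q C = k + 1) with hA
    set B := F.filter (fun C => stackDist F Q C = k) with hB
    have hAmem : ∀ C ∈ A, C ∈ F ∧ stackDist F Q C = k + 1 := by
      intro C hC; simpa [hA, Finset.mem_filter] using hC
    -- disjointness of distinct cubes in A
    have hAdisj : ∀ C1 ∈ A, ∀ C2 ∈ A, C1 ≠ C2 → Disjoint C1.toSet C2.toSet := by
      intro C1 h1 C2 h2 hne
      obtain ⟨h1F, h1d⟩ := hAmem C1 h1
      obtain ⟨h2F, h2d⟩ := hAmem C2 h2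
      rcases Cube.trichotomy (hdesc C1 h1F) (hdesc C2 h2F) with hs | hs | hs
      · rcases hs.lt_or_eq with hss | heq
        · exact absurd (stackDist_lt h2F hss ((hdesc C2 h2F).subset)) (by omega)
        · exact absurd (Cube.toSet_injective hn heq) hne
      · rcases hs.lt_or_eq with hss | heq
        · exact absurd (stackDist_lt h1F hss ((hdesc C1 h1F).subset)) (by omega)
        · exact absurd (Cube.toSet_injective hn heq).symm hne
      · exact hs
    -- choice of parent at level k
    have key : ∀ C : Cube n, ∃ C₀ : Cube n, C ∈ A → C₀ ∈ B ∧ C.toSet ⊆ C₀.toSet := by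
      intro C
      by_cases hC : C ∈ A
      swap
      · exact ⟨C, fun h => absurd h hC⟩
      obtain ⟨hCF, hCd⟩ := hAmem C hC
      set G := F.filter (fun C' => C.toSet ⊂ C'.toSet ∧ C'.toSet ⊆ Q.toSet) with hG
      have hGcard : G.card = k + 1 := hCd
      have hGne : G.Nonempty := Finset.card_pos.1 (by omega)
      obtain ⟨C₀, hC₀G, hmax⟩ := Finset.exists_max_image G (stackDist F Q) hGne
      have hC₀ : C₀ ∈ F ∧ C.toSet ⊂ C₀.toSet ∧ C₀.toSet ⊆ Q.toSet := by
        simpa [hG, Finset.mem_filter] using hC₀G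
      have hmin : ∀ C' ∈ G, C₀.toSet ⊆ C'.toSet := by
        intro C' hC'
        have hC'p : C' ∈ F ∧ C.toSet ⊂ C'.toSet ∧ C'.toSet ⊆ Q.toSet := by
          simpa [hG, Finset.mem_filter] using hC'
        rcases Cube.trichotomy (hdesc C₀ hC₀.1) (hdesc C' hC'p.1) with hs | hs | hs
        · exact hs
        · rcases hs.lt_or_eq with hss | heq
          · exact absurd (stackDist_lt hC₀.1 hss hC₀.2.2) (not_lt.2 (hmax C' hC'))
          · exact heq.symm.le
        · exact absurd (hC'p.2.1.le (C.corner_mem_toSet))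
            (Set.disjoint_left.1 hs (hC₀.2.1.le (C.corner_mem_toSet)))
      have hfilter : F.filter (fun C'' => C₀.toSet ⊂ C''.toSet ∧ C''.toSet ⊆ Q.toSet) =
          G.erase C₀ := by
        ext C''
        simp only [Finset.mem_filter, Finset.mem_erase, hG]
        constructor
        · rintro ⟨hF, hss, hsub⟩
          refine ⟨?_, hF, hC₀.2.1.trans hss, hsub⟩
          rintro rfl
          exact hss.ne rfl
        · rintro ⟨hne, hF, hss, hsub⟩
          refine ⟨hF, ?_, hsub⟩
          refine lt_of_le_of_ne (hmin C'' (by simp [hG, Finset.mem_filter, hF, hss, hsub])) ?_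
          intro heq
          exact hne (Cube.toSet_injective hn heq.symm)
      have hC₀d : stackDist F Q C₀ = k := by
        rw [stackDist, hfilter, Finset.card_erase_of_mem hC₀G, hGcard]
        omega
      exact ⟨C₀, fun _ => ⟨by simp [hB, Finset.mem_filter, hC₀.1, hC₀d], hC₀.2.1.le⟩⟩
    choose g hg using key
    rw [← Finset.sum_fiberwise_of_maps_to (g := g) (fun C hC => (hg C hC).1)
      (fun C => volume C.toSet)]
    apply Finset.sum_le_sum
    intro C₀ _
    have hmeq : volume (⋃ C ∈ A.filter (fun C => g C = C₀), C.toSet)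
        = ∑ C ∈ A.filter (fun C => g C = C₀), volume C.toSet := by
      apply measure_biUnion_finset ?_ (fun C _ => C.measurableSet_toSet)
      intro C1 h1 C2 h2 hne
      exact hAdisj C1 (Finset.filter_subset _ _ h1) C2 (Finset.filter_subset _ _ h2) hne
    rw [← hmeq]
    apply measure_mono
    apply Set.iUnion₂_subset
    intro C hC
    rw [Finset.mem_filter] at hC
    exact hC.2 ▸ (hg C hC.1).2

lemma level_le (F : Finset (Cube n)) (Q : Cube n)
    (hdesc : ∀ C ∈ F, C.IsDescendant Q) (k d : ℕ) :
    ∑ C ∈ F.filter (fun C => stackDist F Q C = k + d), volume C.toSet ≤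
    ∑ C ∈ F.filter (fun C => stackDist F Q C = k), volume C.toSet := by
  induction d with
  | zero => exact le_rfl
  | succ d ih => exact le_trans (level_step F Q hdesc (k + d)) ih

end Stack

theorem anti_carleson_stack_bound {n : ℕ} (D S : Set (Cube n))
    (hD : IsDyadicLattice D) (hS : S ⊆ D) (Λ η : ℝ) (hη : 0 < η)
    (hcar : IsCarleson Λ D S) (M : ℕ) (Q : Cube n) (hQ : Q ∈ D)
    (F : Finset (Cube n)) (hFS : ↑F ⊆ S)
    (hstack : IsAntiCarlesonStack η M Q F) :
    (∀ k ≤ M, ENNReal.ofReal η * volume Q.toSet ≤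
        ∑ C ∈ F.filter (fun C => stackDist F Q C = k), volume C.toSet) ∧
    ((M : ℝ) + 1) * η ≤ Λ := by
  obtain ⟨hQF, hdesc, hM⟩ := hstack
  have part1 : ∀ k ≤ M, ENNReal.ofReal η * volume Q.toSet ≤
      ∑ C ∈ F.filter (fun C => stackDist F Q C = k), volume C.toSet := by
    intro k hk
    obtain ⟨d, rfl⟩ := Nat.exists_eq_add_of_le hk
    exact le_trans hM (level_le F Q hdesc k d)
  refine ⟨part1, ?_⟩
  -- step 1: sum the levels
  have hdisj : ∀ k1 ∈ Finset.range (M + 1), ∀ k2 ∈ Finset.range (M + 1), k1 ≠ k2 →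
      Disjoint (F.filter (fun C => stackDist F Q C = k1))
        (F.filter (fun C => stackDist F Q C = k2)) := by
    intro k1 _ k2 _ hne
    rw [Finset.disjoint_left]
    intro C h1 h2
    rw [Finset.mem_filter] at h1 h2
    exact hne (h1.2 ▸ h2.2)
  have hsum1 : ∑ k ∈ Finset.range (M + 1),
      ∑ C ∈ F.filter (fun C => stackDist F Q C = k), volume C.toSet ≤
      ∑ C ∈ F, volume C.toSet := by
    rw [← Finset.sum_biUnion hdisj]
    exact Finset.sum_le_sum_of_subset (fun C hC => by
      obtain ⟨k, _, hCk⟩ := Finset.mem_biUnion.1 hC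
      exact Finset.filter_subset _ _ hCk)
  -- step 2: compare with the Carleson sum
  have hsum2 : ∑ C ∈ F, volume C.toSet ≤
      ∑' P : {P : Cube n // P ∈ S ∧ P.toSet ⊆ Q.toSet}, volume P.1.toSet := by
    rw [← Finset.sum_subtype_of_mem (fun C => volume C.toSet)
      (s := F) (p := fun P => P ∈ S ∧ P.toSet ⊆ Q.toSet)
      (fun C hC => ⟨hFS hC, (hdesc C hC).subset⟩)]
    exact ENNReal.sum_le_tsum _
  have hcarQ := hcar Q hQ
  -- step 3: lower bound the level sums
  have hlow : (M + 1 : ℝ≥0∞) * (ENNReal.ofReal η * volume Q.toSet) ≤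
      ∑ k ∈ Finset.range (M + 1),
      ∑ C ∈ F.filter (fun C => stackDist F Q C = k), volume C.toSet := by
    calc (M + 1 : ℝ≥0∞) * (ENNReal.ofReal η * volume Q.toSet)
        = ∑ _k ∈ Finset.range (M + 1), ENNReal.ofReal η * volume Q.toSet := by
          rw [Finset.sum_const, Finset.card_range, nsmul_eq_mul]
          push_cast
          ring
      _ ≤ _ := Finset.sum_le_sum (fun k hk => part1 k (by
          simpa using Nat.lt_succ_iff.1 (Finset.mem_range.1 hk)))
  have hfinal : (M + 1 : ℝ≥0∞) * ENNReal.ofReal η * volume Q.toSet ≤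
      ENNReal.ofReal Λ * volume Q.toSet := by
    rw [mul_assoc]
    exact le_trans hlow (le_trans hsum1 (le_trans hsum2 hcarQ))
  have hcancel : (M + 1 : ℝ≥0∞) * ENNReal.ofReal η ≤ ENNReal.ofReal Λ :=
    (ENNReal.mul_le_mul_iff_left (Q.volume_toSet_pos).ne' (Q.volume_toSet_lt_top).ne).1 hfinal
  have hA : ENNReal.ofReal (((M : ℝ) + 1) * η) ≤ ENNReal.ofReal Λ := by
    rw [ENNReal.ofReal_mul (by positivity)]
    calc ENNReal.ofReal ((M : ℝ) + 1) * ENNReal.ofReal η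
        = (M + 1 : ℝ≥0∞) * ENNReal.ofReal η := by
          congr 1
          rw [show ((M : ℝ) + 1) = ((M + 1 : ℕ) : ℝ) by push_cast; ring,
            ENNReal.ofReal_natCast]
          push_cast
          ring
      _ ≤ ENNReal.ofReal Λ := hcancel
  by_cases hΛ : 0 ≤ Λ
  · exact (ENNReal.ofReal_le_ofReal_iff hΛ).1 hA
  · exfalso
    rw [ENNReal.ofReal_eq_zero.2 (le_of_not_ge hΛ)] at hA
    have : (0 : ℝ) < ((M : ℝ) + 1) * η := by positivity
    exact absurd (le_antisymm hA zero_le) (ENNReal.ofReal_pos.2 this).ne'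
end

section
/- If a family S ⊂ D satisfies the Λ-Carleson inequality Σ_{P∈S, P⊆Q}|P| ≤ Λ|Q| for every cube Q ∈ S, then it satisfies the same inequality for every cube Q ∈ D, i.e., S is Λ-Carleson. -/
open MeasureTheory Set
open scoped ENNReal Classical

namespace CubeAux
open Cube

variable {n : ℕ}

lemma corner_mem (Q : Cube n) : Q.corner ∈ Q.toSet :=
  fun i => ⟨le_refl _, by linarith [Q.side_pos]⟩

lemma toSet_eq (Q : Cube n) :
    Q.toSet = Set.pi Set.univ (fun i => Set.Ico (Q.corner i) (Q.corner i + Q.side)) := by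
  ext y; simp [Cube.toSet, Set.mem_pi, Set.mem_Ico]

lemma measurable_toSet (Q : Cube n) : MeasurableSet Q.toSet := by
  rw [toSet_eq]; exact MeasurableSet.univ_pi fun i => measurableSet_Ico

lemma IsChild.toSet_subset {Q' Q : Cube n} (h : Q'.IsChild Q) : Q'.toSet ⊆ Q.toSet := by
  obtain ⟨hs, ε, hc⟩ := h
  intro y hy i
  have hyi := hy i
  rw [hc, hs] at hyi
  simp only at hyi
  by_cases hε : ε i <;> simp [hε] at hyi <;>
    exact ⟨by linarith [Q.side_pos], by linarith [Q.side_pos]⟩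

lemma children_disjoint {Q A B : Cube n} (hA : A.IsChild Q) (hB : B.IsChild Q)
    (hne : A ≠ B) : Disjoint A.toSet B.toSet := by
  obtain ⟨hsA, εA, hcA⟩ := hA
  obtain ⟨hsB, εB, hcB⟩ := hB
  have hε : εA ≠ εB := by
    rintro rfl
    exact hne (by cases A; cases B; simp_all)
  obtain ⟨i, hi⟩ := Function.ne_iff.mp hε
  rw [Set.disjoint_left]
  intro y hyA hyB
  have h1 := hyA i
  have h2 := hyB i
  rw [hcA, hsA] at h1
  rw [hcB, hsB] at h2
  simp only at h1 h2
  rcases Bool.eq_false_or_eq_true (εA i) with hA' | hA' <;>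
    rcases Bool.eq_false_or_eq_true (εB i) with hB' | hB' <;>
      simp [hA', hB'] at h1 h2 hi <;> linarith [Q.side_pos]

lemma IsDescendant.toSet_subset {A B : Cube n} (h : A.IsDescendant B) :
    A.toSet ⊆ B.toSet := by
  induction h with
  | refl => exact subset_rfl
  | tail _ hchild ih => exact ih.trans (IsChild.toSet_subset hchild)

lemma IsDescendant.side_le {A B : Cube n} (h : A.IsDescendant B) : A.side ≤ B.side := by
  induction h with
  | refl => exact le_refl _
  | @tail C B' _ hchild ih =>
    have := hchild.1
    have := B'.side_pos
    linarith

lemma IsDescendant.eq_of_side_eq {A B : Cube n} (h : A.IsDescendant B)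
    (hs : A.side = B.side) : A = B := by
  cases Relation.ReflTransGen.cases_tail h with
  | inl heq => exact heq.symm
  | inr hex =>
    obtain ⟨C, hAC, hCB⟩ := hex
    have h1 : A.side ≤ C.side := IsDescendant.side_le hAC
    have h2 := hCB.1
    have := B.side_pos
    exfalso; linarith

lemma IsDescendant.exists_pow {A B : Cube n} (h : A.IsDescendant B) :
    ∃ k : ℕ, B.side = A.side * 2 ^ k := by
  induction h with
  | refl => exact ⟨0, by simp⟩
  | @tail C B' _ hchild ih =>
    obtain ⟨k, hk⟩ := ih
    refine ⟨k + 1, ?_⟩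
    have h2 := hchild.1
    rw [pow_succ]
    rw [h2] at hk
    linarith

lemma nested_or_disjoint {A R : Cube n} (hA : A.IsDescendant R) :
    ∀ B : Cube n, B.IsDescendant R → ¬ Disjoint A.toSet B.toSet →
      A.IsDescendant B ∨ B.IsDescendant A := by
  induction hA with
  | refl => exact fun B hB _ => Or.inr hB
  | @tail C R' hAC hCR ih =>
    intro B hBR hnd
    rcases Relation.ReflTransGen.cases_tail hBR with heq | ⟨C', hBC', hC'R⟩
    · subst heq; exact Or.inl (Relation.ReflTransGen.tail hAC hCR)
    · by_cases hCC : C = C'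
      · subst hCC; exact ih B hBC' hnd
      · exact absurd ((children_disjoint hCR hC'R hCC).mono
          (IsDescendant.toSet_subset hAC) (IsDescendant.toSet_subset hBC')) hnd

lemma nested_of_mem {D : Set (Cube n)} (hD : IsDyadicLattice D) {A B : Cube n}
    (hA : A ∈ D) (hB : B ∈ D) (hnd : ¬ Disjoint A.toSet B.toSet) :
    A.IsDescendant B ∨ B.IsDescendant A := by
  obtain ⟨R, _, hAR, hBR⟩ := hD.2.1 A hA B hB
  exact nested_or_disjoint hAR B hBR hnd

lemma not_disjoint_of_subsets {A B P : Cube n} (h1 : P.toSet ⊆ A.toSet)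
    (h2 : P.toSet ⊆ B.toSet) : ¬ Disjoint A.toSet B.toSet :=
  Set.not_disjoint_iff.mpr ⟨P.corner, h1 (corner_mem P), h2 (corner_mem P)⟩

lemma side_le_of_subset {A B : Cube n} (i0 : Fin n) (h : A.toSet ⊆ B.toSet) :
    A.side ≤ B.side := by
  by_contra hlt
  push_neg at hlt
  have hcorner := h (corner_mem A) i0
  have hy : (fun i => A.corner i + B.side) ∈ A.toSet := by
    intro i
    refine ⟨?_, ?_⟩ <;> simp only <;> linarith [B.side_pos]
  have hy2 := (h hy) i0
  linarith [hcorner.1, hy2.2]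

lemma desc_of_subset {D : Set (Cube n)} (hD : IsDyadicLattice D) (i0 : Fin n)
    {A B : Cube n} (hA : A ∈ D) (hB : B ∈ D) (h : A.toSet ⊆ B.toSet) :
    A.IsDescendant B := by
  rcases nested_of_mem hD hA hB (not_disjoint_of_subsets subset_rfl h) with h1 | h1
  · exact h1
  · have hss : B.side = A.side :=
      le_antisymm (IsDescendant.side_le h1) (side_le_of_subset i0 h)
    rw [IsDescendant.eq_of_side_eq h1 hss]
    exact Relation.ReflTransGen.refl

lemma eq_of_same_side {D : Set (Cube n)} (hD : IsDyadicLattice D) {A B : Cube n}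
    (hA : A ∈ D) (hB : B ∈ D) (hnd : ¬ Disjoint A.toSet B.toSet)
    (hs : A.side = B.side) : A = B := by
  rcases nested_of_mem hD hA hB hnd with h1 | h1
  · exact IsDescendant.eq_of_side_eq h1 hs
  · exact (IsDescendant.eq_of_side_eq h1 hs.symm).symm

lemma family_finite {D : Set (Cube n)} (hD : IsDyadicLattice D) (i0 : Fin n)
    {P Q : Cube n} (hP : P ∈ D) :
    {M | M ∈ D ∧ P.toSet ⊆ M.toSet ∧ M.toSet ⊆ Q.toSet}.Finite := by
  obtain ⟨K, hK⟩ : ∃ K : ℕ, Q.side < P.side * 2 ^ K := by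
    obtain ⟨K, hK⟩ := pow_unbounded_of_one_lt (Q.side / P.side) (one_lt_two (α := ℝ))
    refine ⟨K, ?_⟩
    have := (div_lt_iff₀ P.side_pos).mp hK
    linarith
  have hfin : (⋃ k ∈ Finset.range K,
      {M : Cube n | M ∈ D ∧ P.toSet ⊆ M.toSet ∧ M.side = P.side * 2 ^ k}).Finite := by
    refine Set.Finite.biUnion (Finset.range K).finite_toSet (fun k _ => ?_)
    apply Set.Subsingleton.finite
    intro M1 h1 M2 h2
    exact eq_of_same_side hD h1.1 h2.1
      (not_disjoint_of_subsets h1.2.1 h2.2.1) (h1.2.2.trans h2.2.2.symm)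
  refine Set.Finite.subset hfin ?_
  · intro M hM
    have hdesc : P.IsDescendant M := desc_of_subset hD i0 hP hM.1 hM.2.1
    obtain ⟨k, hk⟩ := IsDescendant.exists_pow hdesc
    have hkK : k < K := by
      by_contra hge
      push_neg at hge
      have h2 : (2:ℝ) ^ K ≤ 2 ^ k := pow_le_pow_right₀ one_le_two hge
      have h3 : M.side ≤ Q.side := side_le_of_subset i0 hM.2.2
      nlinarith [P.side_pos]
    refine Set.mem_biUnion (Finset.mem_coe.mpr (Finset.mem_range.mpr hkK)) ?_
    exact ⟨hM.1, hM.2.1, hk⟩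


lemma exists_maximal {D S : Set (Cube n)} (hD : IsDyadicLattice D) (hS : S ⊆ D)
    (i0 : Fin n) {P Q : Cube n} (hP : P ∈ S) (hPQ : P.toSet ⊆ Q.toSet) :
    ∃ M, (M ∈ S ∧ M.toSet ⊆ Q.toSet ∧
      ∀ M' ∈ S, M.toSet ⊆ M'.toSet → M'.toSet ⊆ Q.toSet → M' = M) ∧ P.toSet ⊆ M.toSet := by
  set T : Set (Cube n) := {M | M ∈ S ∧ P.toSet ⊆ M.toSet ∧ M.toSet ⊆ Q.toSet} with hT
  have hTfin : T.Finite :=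
    (family_finite hD i0 (hS hP)).subset (fun M hM => ⟨hS hM.1, hM.2⟩)
  have hTne : T.Nonempty := ⟨P, hP, subset_rfl, hPQ⟩
  obtain ⟨M, hMT, hMmax⟩ := Set.Finite.exists_maximalFor Cube.side T hTfin hTne
  refine ⟨M, ⟨hMT.1, hMT.2.2, ?_⟩, hMT.2.1⟩
  intro M' hM' hMM' hM'Q
  have hM'T : M' ∈ T := ⟨hM', hMT.2.1.trans hMM', hM'Q⟩
  have hside : M.side = M'.side :=
    le_antisymm (side_le_of_subset i0 hMM') (hMmax hM'T (side_le_of_subset i0 hMM'))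
  exact eq_of_same_side hD (hS hM') (hS hMT.1)
    (not_disjoint_of_subsets (hMT.2.1.trans hMM') hMT.2.1) hside.symm

lemma maximal_disjoint {D S : Set (Cube n)} (hD : IsDyadicLattice D) (hS : S ⊆ D)
    (Q : Cube n) :
    {M | M ∈ S ∧ M.toSet ⊆ Q.toSet ∧
      ∀ M' ∈ S, M.toSet ⊆ M'.toSet → M'.toSet ⊆ Q.toSet → M' = M}.PairwiseDisjoint
      Cube.toSet := by
  intro M1 h1 M2 h2 hne
  simp only [Function.onFun]
  by_contra hnd
  rcases nested_of_mem hD (hS h1.1) (hS h2.1) hnd with hd | hd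
  · exact hne (h1.2.2 M2 h2.1 (IsDescendant.toSet_subset hd) h2.2.1).symm
  · exact hne (h2.2.2 M1 h1.1 (IsDescendant.toSet_subset hd) h1.2.1)

end CubeAux

open CubeAux in
theorem carleson_test_on_family' {n : ℕ} (D S : Set (Cube n))
    (hD : IsDyadicLattice D) (hS : S ⊆ D) (Λ : ℝ)
    (h : ∀ Q ∈ S, (∑' P : {P : Cube n // P ∈ S ∧ P.toSet ⊆ Q.toSet}, volume P.1.toSet)
      ≤ ENNReal.ofReal Λ * volume Q.toSet) :
    ∀ Q ∈ D, (∑' P : {P : Cube n // P ∈ S ∧ P.toSet ⊆ Q.toSet}, volume P.1.toSet)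
      ≤ ENNReal.ofReal Λ * volume Q.toSet := by
  intro Q hQ
  rcases Nat.eq_zero_or_pos n with hn | hn
  · subst hn
    have huniv : ∀ A : Cube 0, A.toSet = Set.univ :=
      fun A => Set.eq_univ_of_forall (fun y i => i.elim0)
    by_cases hSe : S.Nonempty
    · obtain ⟨Q0, hQ0⟩ := hSe
      have h1 : (∑' P : {P : Cube 0 // P ∈ S ∧ P.toSet ⊆ Q.toSet}, volume P.1.toSet)
          = ∑' P : {P : Cube 0 // P ∈ S ∧ P.toSet ⊆ Q0.toSet}, volume P.1.toSet :=
        by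
        refine Eq.trans (tsum_congr (fun c => rfl)) (Equiv.tsum_eq
          (Equiv.subtypeEquivRight
            (p := fun P : Cube 0 => P ∈ S ∧ P.toSet ⊆ Q.toSet)
            (q := fun P : Cube 0 => P ∈ S ∧ P.toSet ⊆ Q0.toSet) ?_)
          (fun P => volume P.1.toSet))
        intro P
        simp [huniv]
      rw [h1, huniv Q, ← huniv Q0]
      exact h Q0 hQ0
    · haveI : IsEmpty {P : Cube 0 // P ∈ S ∧ P.toSet ⊆ Q.toSet} :=
        ⟨fun P => hSe ⟨P.1, P.2.1⟩⟩
      rw [(tsum_congr fun x => isEmptyElim x).trans tsum_zero]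
      exact zero_le
  · have i0 : Fin n := ⟨0, hn⟩
    set 𝓜 : Set (Cube n) := {M | M ∈ S ∧ M.toSet ⊆ Q.toSet ∧
      ∀ M' ∈ S, M.toSet ⊆ M'.toSet → M'.toSet ⊆ Q.toSet → M' = M} with h𝓜
    have hdisj : 𝓜.PairwiseDisjoint Cube.toSet := maximal_disjoint hD hS Q
    have hmax := fun (P : {P : Cube n // P ∈ S ∧ P.toSet ⊆ Q.toSet}) =>
      exists_maximal hD hS i0 P.2.1 P.2.2
    choose maxOf hmem hsub using hmax
    let ι : {P : Cube n // P ∈ S ∧ P.toSet ⊆ Q.toSet} →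
        Σ M : 𝓜, {P : Cube n // P ∈ S ∧ P.toSet ⊆ M.1.toSet} :=
      fun P => ⟨⟨maxOf P, hmem P⟩, ⟨P.1, P.2.1, hsub P⟩⟩
    have hι : Function.Injective ι := by
      intro P1 P2 hEq
      have h2 := congrArg
        (fun x : Σ M : 𝓜, {P : Cube n // P ∈ S ∧ P.toSet ⊆ M.1.toSet} => x.2.1) hEq
      exact Subtype.ext h2
    have hsum : (∑' M : 𝓜, volume M.1.toSet) ≤ volume Q.toSet := by
      rw [ENNReal.tsum_eq_iSup_sum]
      refine iSup_le fun s => ?_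
      have hpd : Set.PairwiseDisjoint (↑s : Set 𝓜) (fun M : 𝓜 => M.1.toSet) := by
        intro M1 _ M2 _ hne
        exact hdisj M1.2 M2.2 (fun hval => hne (Subtype.ext hval))
      rw [← measure_biUnion_finset hpd (fun M _ => measurable_toSet M.1)]
      exact measure_mono (Set.iUnion₂_subset fun M _ => M.2.2.1)
    calc (∑' P : {P : Cube n // P ∈ S ∧ P.toSet ⊆ Q.toSet}, volume P.1.toSet)
        ≤ ∑' x : Σ M : 𝓜, {P : Cube n // P ∈ S ∧ P.toSet ⊆ M.1.toSet},
            volume x.2.1.toSet :=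
          ENNReal.tsum_comp_le_tsum_of_injective hι (fun x => volume x.2.1.toSet)
      _ = ∑' M : 𝓜, ∑' P : {P : Cube n // P ∈ S ∧ P.toSet ⊆ M.1.toSet},
            volume P.1.toSet := ENNReal.tsum_sigma' _
      _ ≤ ∑' M : 𝓜, ENNReal.ofReal Λ * volume M.1.toSet :=
          ENNReal.tsum_le_tsum (fun M => h M.1 M.2.1)
      _ = ENNReal.ofReal Λ * ∑' M : 𝓜, volume M.1.toSet := ENNReal.tsum_mul_left
      _ ≤ ENNReal.ofReal Λ * volume Q.toSet := mul_le_mul_right hsum _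


theorem carleson_test_on_family {n : ℕ} (D S : Set (Cube n))
    (hD : IsDyadicLattice D) (hS : S ⊆ D) (Λ : ℝ)
    (h : ∀ Q ∈ S, (∑' P : {P : Cube n // P ∈ S ∧ P.toSet ⊆ Q.toSet}, volume P.1.toSet)
      ≤ ENNReal.ofReal Λ * volume Q.toSet) :
    IsCarleson Λ D S := by
  exact fun Q hQ => carleson_test_on_family' D S hD hS Λ h Q hQ
end

section
/- Let P be a boolean condition on nested pairs of dyadic cubes with P(Q,Q) always true. Suppose there is η < 1 such that for every cube Q and every finite collection of pairwise disjoint subcubes Q'_1,...,Q'_N ⊂ Q for which P(Q,Q'_j) fails for each j, one has Σ_j |Q'_j| ≤ η|Q|. Then for every Q, the stopping family stop(Q,P) is 1/(1−η)-Carleson. -/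
open MeasureTheory Set
open scoped ENNReal Classical

namespace StopAux

variable {n : ℕ}

lemma toSet_eq_pi (Q : Cube n) :
    Q.toSet = Set.pi Set.univ (fun i => Ico (Q.corner i) (Q.corner i + Q.side)) := by
  ext y; simp [Cube.toSet, Set.mem_pi, Set.mem_Ico]

lemma measurable_toSet (Q : Cube n) : MeasurableSet Q.toSet := by
  rw [toSet_eq_pi]
  exact MeasurableSet.univ_pi fun i => measurableSet_Ico

lemma volume_toSet (Q : Cube n) : volume Q.toSet = ENNReal.ofReal (Q.side ^ n) := by
  rw [toSet_eq_pi, volume_pi_pi]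
  simp only [Real.volume_Ico, add_sub_cancel_left]
  rw [Finset.prod_const, ← ENNReal.ofReal_pow Q.side_pos.le]
  simp

lemma volume_toSet_pos (Q : Cube n) : 0 < volume Q.toSet := by
  rw [volume_toSet]
  exact ENNReal.ofReal_pos.2 (pow_pos Q.side_pos n)

lemma volume_toSet_ne_top (Q : Cube n) : volume Q.toSet ≠ ∞ := by
  rw [volume_toSet]; exact ENNReal.ofReal_ne_top

lemma corner_mem_toSet (Q : Cube n) : Q.corner ∈ Q.toSet := by
  intro i; exact ⟨le_rfl, by linarith [Q.side_pos]⟩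

lemma toSet_nonempty (Q : Cube n) : Q.toSet.Nonempty := ⟨Q.corner, corner_mem_toSet Q⟩

lemma toSet_inj (hn : 0 < n) {Q Q' : Cube n} (h : Q.toSet = Q'.toSet) : Q = Q' := by
  have key : ∀ (A B : Cube n), A.toSet = B.toSet → A.corner = B.corner → A.side ≤ B.side := by
    intro A B hAB hcc
    by_contra hlt
    push_neg at hlt
    have hmem : (fun i => A.corner i + B.side) ∈ A.toSet := by
      simp only [Cube.toSet, Set.mem_setOf_eq]
      intro i
      exact ⟨by linarith [B.side_pos], by linarith⟩
    rw [hAB] at hmem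
    have h2 := (hmem ⟨0, hn⟩).2
    simp only [congrFun hcc ⟨0, hn⟩] at h2
    linarith
  have hc : Q.corner = Q'.corner := by
    funext i
    have h1 := (h ▸ corner_mem_toSet Q) i
    have h2 := (h.symm ▸ corner_mem_toSet Q') i
    linarith [h1.1, h2.1]
  have hs : Q.side = Q'.side := le_antisymm (key Q Q' h hc) (key Q' Q h.symm hc.symm)
  cases Q; cases Q'; simp_all

lemma child_subset {Q' Q : Cube n} (h : Q'.IsChild Q) : Q'.toSet ⊆ Q.toSet := by
  obtain ⟨hs, ε, hc⟩ := h
  intro y hy i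
  have := hy i
  rw [hc, hs] at this
  have hsp := Q.side_pos
  by_cases hε : ε i
  · simp [hε] at this; constructor <;> linarith [this.1, this.2]
  · simp [hε] at this; constructor <;> linarith [this.1, this.2]

lemma children_eq_or_disjoint {c d Q : Cube n} (hc : c.IsChild Q) (hd : d.IsChild Q) :
    c = d ∨ Disjoint c.toSet d.toSet := by
  obtain ⟨hcs, ε, hcc⟩ := hc
  obtain ⟨hds, δ, hdc⟩ := hd
  by_cases hεδ : ∀ i, ε i = δ i
  · left
    cases c; cases d
    simp only [Cube.mk.injEq]
    constructor
    · simp only at hcc hdc; rw [hcc, hdc]; funext i; rw [hεδ i]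
    · simp only at hcs hds; rw [hcs, hds]
  · right
    push_neg at hεδ
    obtain ⟨i, hi⟩ := hεδ
    rw [Set.disjoint_left]
    intro y hyc hyd
    have h1 := hyc i
    have h2 := hyd i
    rw [hcc, hcs] at h1
    rw [hdc, hds] at h2
    have hsp := Q.side_pos
    rcases Bool.eq_false_or_eq_true (ε i) with he | he <;>
      rcases Bool.eq_false_or_eq_true (δ i) with hf | hf <;>
        simp [he, hf] at hi h1 h2 <;> linarith [h1.1, h1.2, h2.1, h2.2]

/-- exact-depth-bounded descendant, unfolding from the top -/
def DescN : ℕ → Cube n → Cube n → Prop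
  | 0, A, Q => A = Q
  | (k+1), A, Q => A = Q ∨ ∃ c : Cube n, c.IsChild Q ∧ DescN k A c

lemma descN_subset : ∀ k (A Q : Cube n), DescN k A Q → A.toSet ⊆ Q.toSet := by
  intro k
  induction k with
  | zero => intro A Q h; rw [h]
  | succ k ih =>
    rintro A Q (rfl | ⟨c, hc, hAc⟩)
    · exact subset_rfl
    · exact (ih A c hAc).trans (child_subset hc)

lemma isDescendant_descN {A Q : Cube n} (h : A.IsDescendant Q) : ∃ k, DescN k A Q := by
  induction h with
  | refl => exact ⟨0, rfl⟩
  | tail _ hbQ ih =>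
    obtain ⟨k, hk⟩ := ih
    exact ⟨k + 1, Or.inr ⟨_, hbQ, hk⟩⟩

lemma descN_nested_or_disjoint :
    ∀ m k l (Q A B : Cube n), k + l ≤ m → DescN k A Q → DescN l B Q →
      A.toSet ⊆ B.toSet ∨ B.toSet ⊆ A.toSet ∨ Disjoint A.toSet B.toSet := by
  intro m
  induction m with
  | zero =>
    intro k l Q A B hm hA hB
    obtain rfl : k = 0 := by omega
    obtain rfl : l = 0 := by omega
    have hA' : A = Q := hA
    have hB' : B = Q := hB
    subst hA'; subst hB'
    exact Or.inl subset_rfl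
  | succ m ih =>
    intro k l Q A B hm hA hB
    cases k with
    | zero =>
      have hA' : A = Q := hA
      subst hA'
      exact Or.inr (Or.inl (descN_subset l B A hB))
    | succ k' =>
      rcases (hA : A = Q ∨ ∃ c : Cube n, c.IsChild Q ∧ DescN k' A c) with rfl | ⟨c, hc, hAc⟩
      · exact Or.inr (Or.inl (descN_subset l B A hB))
      · cases l with
        | zero =>
          have hB' : B = Q := hB
          subst hB'
          exact Or.inl ((descN_subset _ _ _ hAc).trans (child_subset hc))
        | succ l' =>
          rcases (hB : B = Q ∨ ∃ d : Cube n, d.IsChild Q ∧ DescN l' B d) with rfl | ⟨d, hd, hBd⟩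
          · exact Or.inl ((descN_subset _ _ _ hAc).trans (child_subset hc))
          · rcases children_eq_or_disjoint hc hd with rfl | hdisj
            · exact ih k' l' c A B (by omega) hAc hBd
            · exact Or.inr (Or.inr (Set.disjoint_of_subset (descN_subset _ _ _ hAc)
                (descN_subset _ _ _ hBd) hdisj))

lemma descendant_nested_or_disjoint {Q A B : Cube n}
    (hA : A.IsDescendant Q) (hB : B.IsDescendant Q) :
    A.toSet ⊆ B.toSet ∨ B.toSet ⊆ A.toSet ∨ Disjoint A.toSet B.toSet := by
  obtain ⟨k, hk⟩ := isDescendant_descN hA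
  obtain ⟨l, hl⟩ := isDescendant_descN hB
  exact descN_nested_or_disjoint (k + l) k l Q A B le_rfl hk hl

end StopAux

section Main
open StopAux

variable {n : ℕ} {D : Set (Cube n)} {P : Cube n → Cube n → Prop} {Q : Cube n}

lemma nested_or_disjoint (hD : IsDyadicLattice D) {A B : Cube n} (hA : A ∈ D) (hB : B ∈ D) :
    A.toSet ⊆ B.toSet ∨ B.toSet ⊆ A.toSet ∨ Disjoint A.toSet B.toSet := by
  obtain ⟨T, _, hAT, hBT⟩ := hD.2.1 A hA B hB
  exact descendant_nested_or_disjoint hAT hBT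

lemma stopStep_eq_or_disjoint (hn : 0 < n) (hD : IsDyadicLattice D) {c₁ c₂ R : Cube n}
    (h1 : stopStep D P c₁ R) (h2 : stopStep D P c₂ R) :
    c₁ = c₂ ∨ Disjoint c₁.toSet c₂.toSet := by
  rcases nested_or_disjoint hD h1.1 h2.1 with hsub | hsub | hdis
  · by_cases heq : c₁.toSet = c₂.toSet
    · exact Or.inl (toSet_inj hn heq)
    · exact absurd (h1.2.2.2 c₂ h2.1 (ssubset_of_subset_of_ne hsub heq) h2.2.1) h2.2.2.1
  · by_cases heq : c₂.toSet = c₁.toSet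
    · exact Or.inl (toSet_inj hn heq).symm
    · exact absurd (h2.2.2.2 c₁ h1.1 (ssubset_of_subset_of_ne hsub heq) h1.2.1) h1.2.2.1
  · exact Or.inr hdis

lemma stopFamily_mem_D (hQ : Q ∈ D) {R : Cube n} (h : R ∈ stopFamily D P Q) : R ∈ D := by
  rcases Relation.ReflTransGen.cases_head h with rfl | ⟨b, hstep, _⟩
  · exact hQ
  · exact hstep.1

lemma stopFamily_subset_s15 {R : Cube n} (h : R ∈ stopFamily D P Q) : R.toSet ⊆ Q.toSet := by
  induction h using Relation.ReflTransGen.head_induction_on with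
  | refl => exact subset_rfl
  | head hstep _ ih => exact hstep.2.1.trans ih

/-- reachability in at most `k` stopping steps -/
def reachN (D : Set (Cube n)) (P : Cube n → Cube n → Prop) (Q : Cube n) :
    ℕ → Cube n → Prop
  | 0, R => R = Q
  | (k+1), R => R = Q ∨ ∃ b, stopStep D P R b ∧ reachN D P Q k b

lemma mem_stopFamily_reachN {R : Cube n} (h : R ∈ stopFamily D P Q) :
    ∃ k, reachN D P Q k R := by
  induction h using Relation.ReflTransGen.head_induction_on with
  | refl => exact ⟨0, rfl⟩
  | head hstep _ ih =>
    obtain ⟨k, hk⟩ := ih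
    exact ⟨k + 1, Or.inr ⟨_, hstep, hk⟩⟩

lemma reachN_subset : ∀ k {R : Cube n}, reachN D P Q k R → R.toSet ⊆ Q.toSet := by
  intro k
  induction k with
  | zero => intro R h; rw [show R = Q from h]
  | succ k ih =>
    rintro R (rfl | ⟨b, hstep, hb⟩)
    · exact subset_rfl
    · exact hstep.2.1.trans (ih hb)

lemma reachN_mem_D (hQ : Q ∈ D) : ∀ k {R : Cube n}, reachN D P Q k R → R ∈ D := by
  intro k
  induction k with
  | zero => intro R h; rw [show R = Q from h]; exact hQ
  | succ k _ =>
    rintro R (rfl | ⟨b, hstep, _⟩)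
    · exact hQ
    · exact hstep.1

lemma tree_lemma (hn : 0 < n) (hD : IsDyadicLattice D) (hQ : Q ∈ D) :
    ∀ m k l (R₁ R₂ : Cube n), k + l ≤ m → reachN D P Q k R₁ → reachN D P Q l R₂ →
      R₂.toSet ⊂ R₁.toSet → ∃ c, stopStep D P c R₁ ∧ R₂.toSet ⊆ c.toSet := by
  intro m
  induction m with
  | zero =>
    intro k l R₁ R₂ hm h1 h2 hss
    obtain rfl : l = 0 := by omega
    have h2' : R₂ = Q := h2
    subst h2'
    exact absurd (reachN_subset k h1) hss.not_subset
  | succ m ih =>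
    intro k l R₁ R₂ hm h1 h2 hss
    cases l with
    | zero =>
      have h2' : R₂ = Q := h2
      subst h2'
      exact absurd (reachN_subset k h1) hss.not_subset
    | succ l' =>
      rcases (h2 : R₂ = Q ∨ ∃ b, stopStep D P R₂ b ∧ reachN D P Q l' b) with rfl | ⟨b, hstep, hrb⟩
      · exact absurd ((reachN_subset k h1)) hss.not_subset
      · have hbD : b ∈ D := reachN_mem_D hQ l' hrb
        have hR₁D : R₁ ∈ D := reachN_mem_D hQ k h1
        rcases nested_or_disjoint hD hbD hR₁D with hsub | hsub | hdis
        · -- b ⊆ R₁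
          by_cases heq : b.toSet = R₁.toSet
          · have : b = R₁ := toSet_inj hn heq
            subst this
            exact ⟨R₂, hstep, subset_rfl⟩
          · obtain ⟨c, hc, hbc⟩ := ih k l' R₁ b (by omega) h1 hrb
              (ssubset_of_subset_of_ne hsub heq)
            exact ⟨c, hc, hstep.2.1.trans hbc⟩
        · -- R₁ ⊆ b
          by_cases heq : R₁.toSet = b.toSet
          · have : R₁ = b := toSet_inj hn heq
            subst this
            exact ⟨R₂, hstep, subset_rfl⟩
          · obtain ⟨c', hc', hR1c⟩ := ih l' k b R₁ (by omega) hrb h1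
              (ssubset_of_subset_of_ne hsub heq)
            rcases stopStep_eq_or_disjoint hn hD hstep hc' with rfl | hdisj
            · exact absurd hR1c hss.not_subset
            · obtain ⟨y, hy⟩ := toSet_nonempty R₂
              exact absurd (hR1c (hss.subset hy)) (Set.disjoint_left.1 hdisj hy)
        · -- disjoint b R₁ : impossible, R₂ nonempty inside both
          obtain ⟨y, hy⟩ := toSet_nonempty R₂
          exact absurd (hss.subset hy) (Set.disjoint_left.1 hdis (hstep.2.1 hy))


lemma children_pairwiseDisjoint (hn : 0 < n) (hD : IsDyadicLattice D) (R : Cube n) :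
    {c : Cube n | stopStep D P c R}.PairwiseDisjoint Cube.toSet := by
  intro c₁ h₁ c₂ h₂ hne
  rcases stopStep_eq_or_disjoint hn hD h₁ h₂ with rfl | h
  · exact absurd rfl hne
  · exact h

lemma children_countable (hn : 0 < n) (hD : IsDyadicLattice D) (R : Cube n) :
    {c : Cube n | stopStep D P c R}.Countable := by
  set C := {c : Cube n | stopStep D P c R} with hC
  have hk := MeasureTheory.Measure.countable_meas_pos_of_disjoint_iUnion
    (μ := volume) (As := fun c : C => c.1.toSet)
    (fun c => measurable_toSet _)
    (fun c₁ c₂ hne => children_pairwiseDisjoint hn hD R c₁.2 c₂.2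
      (fun h => hne (Subtype.ext h)))
  have huniv : {i : ↥C | 0 < volume i.1.toSet} = Set.univ :=
    Set.eq_univ_of_forall fun i => volume_toSet_pos _
  rw [huniv] at hk
  haveI : Countable ↥C := Set.countable_univ_iff.1 hk
  exact Set.countable_coe_iff.1 this

lemma volume_children_le (hn : 0 < n) (hD : IsDyadicLattice D) {η : ℝ}
    {R : Cube n} (hR : R ∈ D)
    (hcond : ∀ G : Finset (Cube n),
      (∀ A ∈ G, A ∈ D ∧ A.toSet ⊆ R.toSet ∧ ¬P R A) →
      (G : Set (Cube n)).PairwiseDisjoint Cube.toSet →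
      ∑ A ∈ G, volume A.toSet ≤ ENNReal.ofReal η * volume R.toSet) :
    volume (⋃ c ∈ {c : Cube n | stopStep D P c R}, c.toSet)
      ≤ ENNReal.ofReal η * volume R.toSet := by
  set C := {c : Cube n | stopStep D P c R} with hC
  haveI : Countable ↥C := (children_countable hn hD R).to_subtype
  have hmu : volume (⋃ c : ↥C, (c : Cube n).toSet) = ∑' c : ↥C, volume (c : Cube n).toSet := by
    refine measure_iUnion ?_ (fun c => measurable_toSet _)
    intro c₁ c₂ hne
    exact children_pairwiseDisjoint hn hD R c₁.2 c₂.2 (fun h => hne (Subtype.ext h))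
  rw [Set.biUnion_eq_iUnion, hmu, ENNReal.tsum_eq_iSup_sum]
  refine iSup_le fun s => ?_
  have hsum : ∑ A ∈ s.image Subtype.val, volume A.toSet
      = ∑ c ∈ s, volume (c : Cube n).toSet :=
    Finset.sum_image (fun x _ y _ h => Subtype.ext h)
  rw [← hsum]
  refine hcond _ (fun A hA => ?_) ?_
  · obtain ⟨c, _, rfl⟩ := Finset.mem_image.1 hA
    exact ⟨c.2.1, c.2.2.1, c.2.2.2.1⟩
  · refine (children_pairwiseDisjoint (P := P) hn hD R).subset ?_
    intro A hA
    obtain ⟨c, _, rfl⟩ := Finset.mem_image.1 hA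
    exact c.2

lemma volume_diff_lower (hn : 0 < n) (hD : IsDyadicLattice D) {η : ℝ}
    (hη0 : 0 ≤ η) (hη1 : η < 1) {R : Cube n} (hR : R ∈ D)
    (hcond : ∀ G : Finset (Cube n),
      (∀ A ∈ G, A ∈ D ∧ A.toSet ⊆ R.toSet ∧ ¬P R A) →
      (G : Set (Cube n)).PairwiseDisjoint Cube.toSet →
      ∑ A ∈ G, volume A.toSet ≤ ENNReal.ofReal η * volume R.toSet) :
    ENNReal.ofReal (1 - η) * volume R.toSet
      ≤ volume (R.toSet \ ⋃ c ∈ {c : Cube n | stopStep D P c R}, c.toSet) := by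
  set U := ⋃ c ∈ {c : Cube n | stopStep D P c R}, c.toSet with hU
  have hUR : U ⊆ R.toSet := Set.iUnion₂_subset fun c hc => hc.2.1
  have h1 : volume R.toSet ≤ volume (R.toSet \ U) + volume U := by
    conv_lhs => rw [← Set.diff_union_of_subset hUR]
    exact measure_union_le _ _
  have h2 : volume R.toSet ≤ volume (R.toSet \ U) + ENNReal.ofReal η * volume R.toSet :=
    h1.trans (add_le_add_right (volume_children_le hn hD hR hcond) _)
  have key : ENNReal.ofReal (1 - η) * volume R.toSet + ENNReal.ofReal η * volume R.toSet
      = volume R.toSet := by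
    rw [← add_mul, ← ENNReal.ofReal_add (by linarith) hη0, sub_add_cancel,
      ENNReal.ofReal_one, one_mul]
  have hfin : ENNReal.ofReal η * volume R.toSet ≠ ∞ :=
    ENNReal.mul_ne_top ENNReal.ofReal_ne_top (volume_toSet_ne_top R)
  rw [← ENNReal.add_le_add_iff_right hfin, key]
  exact h2

end Main
set_option maxHeartbeats 1000000 in
theorem stopping_family_carleson {n : ℕ} (D : Set (Cube n)) (hD : IsDyadicLattice D)
    (P : Cube n → Cube n → Prop) (hP : ∀ Q : Cube n, P Q Q)
    (η : ℝ) (hη0 : 0 ≤ η) (hη1 : η < 1)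
    (hcond : ∀ Q ∈ D, ∀ G : Finset (Cube n),
      (∀ R ∈ G, R ∈ D ∧ R.toSet ⊆ Q.toSet ∧ ¬P Q R) →
      (G : Set (Cube n)).PairwiseDisjoint Cube.toSet →
      ∑ R ∈ G, volume R.toSet ≤ ENNReal.ofReal η * volume Q.toSet) :
    ∀ Q ∈ D, IsCarleson (1 / (1 - η)) D (stopFamily D P Q) := by
  intro Q hQ Q₀ hQ₀
  have h01 : (0 : ℝ) < 1 - η := by linarith
  have hfrac : (1 : ℝ) ≤ 1 / (1 - η) := by
    rw [le_div_iff₀ h01]; linarith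
  rcases Nat.eq_zero_or_pos n with hn | hn
  · -- degenerate case n = 0
    subst hn
    have hvol : ∀ A : Cube 0, volume A.toSet = 1 := by
      intro A; rw [StopAux.volume_toSet]; simp
    have hmem : ∀ R, R ∈ stopFamily D P Q → R = Q := by
      intro R hR
      induction hR using Relation.ReflTransGen.head_induction_on with
      | refl => rfl
      | head hstep _ ih =>
        exfalso
        rename_i a c _
        rw [ih] at hstep
        have hc := hcond Q hQ {a} ?_ ?_
        · rw [Finset.sum_singleton, hvol a, hvol Q, mul_one] at hc
          exact absurd hc (by simpa using (ENNReal.ofReal_lt_one.2 hη1).not_ge)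
        · intro A hA
          rw [Finset.mem_singleton] at hA
          subst hA
          exact ⟨hstep.1, hstep.2.1, hstep.2.2.1⟩
        · simp [Set.PairwiseDisjoint]
    have hsubQ : Q.toSet ⊆ Q₀.toSet := fun y _ i => i.elim0
    set ι := {R : Cube 0 // R ∈ stopFamily D P Q ∧ R.toSet ⊆ Q₀.toSet}
    have htsum : ∑' R : ι, volume R.1.toSet = volume Q.toSet := by
      refine tsum_eq_single (⟨Q, Relation.ReflTransGen.refl, hsubQ⟩ : ι) ?_
      intro b hb
      exact absurd (Subtype.ext (hmem b.1 b.2.1)) hb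
    rw [htsum, hvol Q, hvol Q₀, mul_one]
    exact ENNReal.one_le_ofReal.2 hfrac
  · -- main case
    set E : Cube n → Set (Fin n → ℝ) :=
      fun R => R.toSet \ ⋃ c ∈ {c : Cube n | stopStep D P c R}, c.toSet with hE
    have hmeasE : ∀ R : Cube n, MeasurableSet (E R) := by
      intro R
      exact (StopAux.measurable_toSet R).diff
        (MeasurableSet.biUnion (children_countable hn hD R)
          (fun c _ => StopAux.measurable_toSet c))
    have hEsub : ∀ R : Cube n, E R ⊆ R.toSet := fun R => Set.diff_subset
    have hlow : ∀ R ∈ D, ENNReal.ofReal (1 - η) * volume R.toSet ≤ volume (E R) :=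
      fun R hR => volume_diff_lower hn hD hη0 hη1 hR (hcond R hR)
    have hdisjE : ∀ R₁, R₁ ∈ stopFamily D P Q → ∀ R₂, R₂ ∈ stopFamily D P Q →
        R₁ ≠ R₂ → Disjoint (E R₁) (E R₂) := by
      have key : ∀ R₁, R₁ ∈ stopFamily D P Q → ∀ R₂, R₂ ∈ stopFamily D P Q →
          R₁.toSet ⊂ R₂.toSet → Disjoint (E R₁) (E R₂) := by
        intro R₁ h₁ R₂ h₂ hss
        obtain ⟨k, hk⟩ := mem_stopFamily_reachN h₂
        obtain ⟨l, hl⟩ := mem_stopFamily_reachN h₁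
        obtain ⟨c, hc, hsub⟩ := tree_lemma hn hD hQ (k + l) k l R₂ R₁ le_rfl hk hl hss
        rw [Set.disjoint_right]
        intro y hy₂ hy₁
        exact hy₂.2 (Set.mem_biUnion hc (hsub (hEsub R₁ hy₁)))
      intro R₁ h₁ R₂ h₂ hne
      rcases nested_or_disjoint hD (stopFamily_mem_D hQ h₁) (stopFamily_mem_D hQ h₂)
        with hsub | hsub | hdis
      · exact key R₁ h₁ R₂ h₂ (ssubset_of_subset_of_ne hsub
          (fun h => hne (StopAux.toSet_inj hn h)))
      · exact (key R₂ h₂ R₁ h₁ (ssubset_of_subset_of_ne hsub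
          (fun h => hne (StopAux.toSet_inj hn h.symm)))).symm
      · exact hdis.mono (hEsub R₁) (hEsub R₂)
    set ι := {R : Cube n // R ∈ stopFamily D P Q ∧ R.toSet ⊆ Q₀.toSet}
    have hmul : ENNReal.ofReal (1 / (1 - η)) * ENNReal.ofReal (1 - η) = 1 := by
      rw [← ENNReal.ofReal_mul (by positivity), one_div_mul_cancel h01.ne',
        ENNReal.ofReal_one]
    have hper : ∀ R : ι, volume R.1.toSet
        ≤ ENNReal.ofReal (1 / (1 - η)) * volume (E R.1) := by
      intro R
      calc volume R.1.toSet
          = ENNReal.ofReal (1 / (1 - η)) * (ENNReal.ofReal (1 - η) * volume R.1.toSet) := by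
            rw [← mul_assoc, hmul, one_mul]
        _ ≤ ENNReal.ofReal (1 / (1 - η)) * volume (E R.1) :=
            mul_le_mul_right (hlow R.1 (stopFamily_mem_D hQ R.2.1)) _
    calc ∑' R : ι, volume R.1.toSet
        ≤ ∑' R : ι, ENNReal.ofReal (1 / (1 - η)) * volume (E R.1) :=
          ENNReal.tsum_le_tsum hper
      _ = ENNReal.ofReal (1 / (1 - η)) * ∑' R : ι, volume (E R.1) :=
          ENNReal.tsum_mul_left
      _ ≤ ENNReal.ofReal (1 / (1 - η)) * volume (⋃ R : ι, E R.1) := by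
          refine mul_le_mul_right (tsum_meas_le_meas_iUnion_of_disjoint volume
            (fun (R : ι) => hmeasE R.1) ?_) _
          intro R₁ R₂ hne
          exact hdisjE R₁.1 R₁.2.1 R₂.1 R₂.2.1 (fun h => hne (Subtype.ext h))
      _ ≤ ENNReal.ofReal (1 / (1 - η)) * volume Q₀.toSet := by
          refine mul_le_mul_right (measure_mono ?_) _
          refine Set.iUnion_subset ?_
          intro R
          exact (hEsub R.1).trans R.2.2
end

section
/- Let Q ⊂ ℝⁿ be a measurable set of finite positive measure, f measurable and finite a.e. on Q, and λ ∈ (0,1). Then the infimum defining the λ-oscillation ω_λ(f;Q) = inf{ω(f;E) : E ⊆ Q, |E| ≥ (1−λ)|Q|} is attained: there exists a set E ⊆ Q with |E| ≥ (1−λ)|Q| and ω(f;E) = ω_λ(f;Q). -/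
open MeasureTheory Set
open scoped ENNReal Classical

/-- The oscillation `sup_E f − inf_E f` of `f` on `E`, valued in `ℝ≥0∞`. -/
noncomputable def osc {n : ℕ} (f : (Fin n → ℝ) → ℝ) (E : Set (Fin n → ℝ)) : ℝ≥0∞ :=
  ⨆ x ∈ E, ⨆ y ∈ E, ENNReal.ofReal (f x - f y)

/-- The `λ`-oscillation `ω_λ(f; Q)` of `f` on a measurable set `Q`. -/
noncomputable def oscLambda {n : ℕ} (l : ℝ) (f : (Fin n → ℝ) → ℝ)
    (Q : Set (Fin n → ℝ)) : ℝ≥0∞ :=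
  ⨅ E ∈ {E : Set (Fin n → ℝ) | E ⊆ Q ∧ MeasurableSet E ∧
    ENNReal.ofReal (1 - l) * volume Q ≤ volume E}, osc f E

open scoped Topology
theorem oscLambda_attained {n : ℕ} (f : (Fin n → ℝ) → ℝ) (hf : Measurable f)
    (Q : Set (Fin n → ℝ)) (hQ : MeasurableSet Q)
    (hQ0 : 0 < volume Q) (hQfin : volume Q < ⊤)
    (l : ℝ) (hl : l ∈ Set.Ioo (0 : ℝ) 1) :
    ∃ E : Set (Fin n → ℝ), E ⊆ Q ∧ MeasurableSet E ∧
      ENNReal.ofReal (1 - l) * volume Q ≤ volume E ∧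
      osc f E = oscLambda l f Q := by
  classical
  set ω := oscLambda l f Q with hω
  set c : ℝ≥0∞ := ENNReal.ofReal (1 - l) * volume Q with hc
  have hc0 : 0 < c := by
    apply ENNReal.mul_pos
    · simp [ENNReal.ofReal_pos]; linarith [hl.2]
    · exact hQ0.ne'
  have hQmem : Q ∈ {E : Set (Fin n → ℝ) | E ⊆ Q ∧ MeasurableSet E ∧
      ENNReal.ofReal (1 - l) * volume Q ≤ volume E} := by
    refine ⟨subset_rfl, hQ, ?_⟩
    calc ENNReal.ofReal (1 - l) * volume Q ≤ 1 * volume Q := by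
          gcongr
          exact ENNReal.ofReal_le_one.2 (by linarith [hl.1])
      _ = volume Q := one_mul _
  have hωle : ω ≤ osc f Q := iInf₂_le Q hQmem
  by_cases htop : ω = ⊤
  · refine ⟨Q, subset_rfl, hQ, hQmem.2.2, ?_⟩
    rw [htop] at hωle ⊢
    exact top_le_iff.1 hωle
  -- ω < ⊤ case
  set r : ℝ := ω.toReal with hr
  have hr0 : 0 ≤ r := ENNReal.toReal_nonneg
  have hωr : ω = ENNReal.ofReal r := (ENNReal.ofReal_toReal htop).symm
  -- Step A: find M : ℕ with volume (Q \ f ⁻¹' Icc (-M) M) < c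
  have hA : ∃ M : ℕ, volume (Q \ f ⁻¹' Icc (-(M:ℝ)) M) < c := by
    set g : ℕ → Set (Fin n → ℝ) := fun m => Q \ f ⁻¹' Icc (-(m:ℝ)) m with hg
    have hmeas : ∀ m, MeasurableSet (g m) := fun m => hQ.diff (hf measurableSet_Icc)
    have hanti : Antitone g := by
      intro m m' hmm x hx
      refine ⟨hx.1, fun hmem => hx.2 ?_⟩
      exact Icc_subset_Icc (by exact_mod_cast neg_le_neg (Nat.cast_le.2 hmm)) (by exact_mod_cast hmm) hmem
    have hempty : (⋂ m, g m) = ∅ := by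
      ext x
      simp only [hg, mem_iInter, mem_diff, mem_preimage, mem_Icc, mem_empty_iff_false,
        iff_false, not_forall]
      push_neg
      obtain ⟨m, hm⟩ := exists_nat_ge |f x|
      exact ⟨m, fun hxQ => ⟨by linarith [abs_le.1 hm |>.1], by linarith [abs_le.1 hm |>.2]⟩⟩
    have hT : Filter.Tendsto (fun m => volume (g m)) Filter.atTop (𝓝 (volume (⋂ m, g m))) :=
      tendsto_measure_iInter_atTop (fun m => (hmeas m).nullMeasurableSet) hanti
        ⟨0, ((measure_mono (diff_subset)).trans_lt hQfin).ne⟩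
    rw [hempty, measure_empty] at hT
    have := hT.eventually_lt_const hc0
    exact this.exists
  obtain ⟨M, hM⟩ := hA
  -- Step B: for each k, find a_k
  have key : ∀ k : ℕ, ∃ a : ℝ, |a| ≤ M + r + 1 ∧
      c ≤ volume (Q ∩ f ⁻¹' Icc a (a + (r + 1/(k+1)))) := by
    intro k
    have hεpos : (0:ℝ) < 1/(k+1) := by positivity
    have hlt : ω < ω + ENNReal.ofReal (1/(k+1)) :=
      ENNReal.lt_add_right htop (ENNReal.ofReal_pos.2 hεpos).ne'
    have : oscLambda l f Q < ω + ENNReal.ofReal (1/(k+1)) := hω ▸ hlt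
    simp only [oscLambda, iInf_lt_iff, mem_setOf_eq] at this
    obtain ⟨E, hEmem, hEosc⟩ := this
    obtain ⟨hEQ, hEmeas, hEvol⟩ := hEmem
    have hEne : E.Nonempty := by
      apply nonempty_of_measure_ne_zero (μ := volume)
      exact (lt_of_lt_of_le hc0 hEvol).ne'
    obtain ⟨y0, hy0⟩ := hEne
    -- bound the oscillation on E
    have hb : ∀ x ∈ E, ∀ y ∈ E, f x - f y ≤ r + 1/(k+1) := by
      intro x hx y hy
      have h1 : ENNReal.ofReal (f x - f y) ≤ osc f E := by
        calc ENNReal.ofReal (f x - f y)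
            ≤ ⨆ y ∈ E, ENNReal.ofReal (f x - f y) := le_iSup₂ (f := fun y (_ : y ∈ E) => ENNReal.ofReal (f x - f y)) y hy
          _ ≤ osc f E := le_iSup₂ (f := fun x (_ : x ∈ E) => ⨆ y ∈ E, ENNReal.ofReal (f x - f y)) x hx
      have h2 : ENNReal.ofReal (f x - f y) ≤ ENNReal.ofReal (r + 1/(k+1)) := by
        calc ENNReal.ofReal (f x - f y) ≤ ω + ENNReal.ofReal (1/(k+1)) := h1.trans hEosc.le
          _ = ENNReal.ofReal (r + 1/(k+1)) := by
              rw [hωr, ← ENNReal.ofReal_add hr0 hεpos.le]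
      exact (ENNReal.ofReal_le_ofReal_iff (by positivity)).1 h2
    set a : ℝ := sInf (f '' E) with ha
    have hbdd : BddBelow (f '' E) := by
      refine ⟨f y0 - (r + 1/(k+1)), ?_⟩
      rintro - ⟨x, hx, rfl⟩
      linarith [hb y0 hy0 x hx]
    have h1 : ∀ x ∈ E, a ≤ f x := fun x hx => csInf_le hbdd ⟨x, hx, rfl⟩
    have h2 : ∀ x ∈ E, f x ≤ a + (r + 1/(k+1)) := by
      intro x hx
      have : f x - (r + 1/(k+1)) ≤ a := by
        refine le_csInf ⟨f y0, ⟨y0, hy0, rfl⟩⟩ ?_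
        rintro - ⟨y, hy, rfl⟩
        linarith [hb x hx y hy]
      linarith
    have hsub : E ⊆ Q ∩ f ⁻¹' Icc a (a + (r + 1/(k+1))) :=
      fun x hx => ⟨hEQ hx, h1 x hx, h2 x hx⟩
    have hvol : c ≤ volume (Q ∩ f ⁻¹' Icc a (a + (r + 1/(k+1)))) :=
      hEvol.trans (measure_mono hsub)
    refine ⟨a, ?_, hvol⟩
    -- bound |a|
    have hnone : ¬ (Q ∩ f ⁻¹' Icc a (a + (r + 1/(k+1))) ⊆ Q \ f ⁻¹' Icc (-(M:ℝ)) M) := by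
      intro hsub2
      exact absurd ((hvol.trans (measure_mono hsub2))) (not_le.2 hM)
    rw [not_subset] at hnone
    obtain ⟨x, ⟨hxQ, hxa1, hxa2⟩, hx2⟩ := hnone
    have hxM : f x ∈ Icc (-(M:ℝ)) M := by
      by_contra h
      exact hx2 ⟨hxQ, h⟩
    have hε1 : (1:ℝ)/(k+1) ≤ 1 := by
      rw [div_le_one (by positivity)]
      linarith [Nat.cast_nonneg (α := ℝ) k]
    rw [abs_le]
    constructor
    · have := hxM.1
      have : -(M:ℝ) - (r + 1/(k+1)) ≤ a := by linarith [hxM.1, hxa2]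
      linarith
    · linarith [hxM.2, hxa1]
  choose a haBdd haVol using key
  -- Step C: Bolzano–Weierstrass
  obtain ⟨b, hbmem, φ, hφ, hφT⟩ :=
    (isCompact_Icc (a := -((M:ℝ) + r + 1)) (b := (M:ℝ) + r + 1)).tendsto_subseq
      (x := a) (fun k => abs_le.1 (haBdd k))
  -- Step D
  have hD : ∀ δ : ℝ, 0 < δ → c ≤ volume (Q ∩ f ⁻¹' Icc (b - δ) (b + r + δ)) := by
    intro δ hδ
    have h1 : ∀ᶠ j in Filter.atTop, |a (φ j) - b| < δ/2 := by
      have := hφT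
      rw [Metric.tendsto_atTop] at this
      obtain ⟨N, hN⟩ := this (δ/2) (by linarith)
      exact Filter.eventually_atTop.2 ⟨N, fun j hj => by
        have := hN j hj
        simpa [Real.dist_eq] using this⟩
    have h2 : ∀ᶠ j in Filter.atTop, (1:ℝ)/(φ j + 1) < δ/2 := by
      obtain ⟨N, hN⟩ := exists_nat_one_div_lt (show (0:ℝ) < δ/2 by linarith)
      refine Filter.eventually_atTop.2 ⟨N, fun j hj => ?_⟩
      have hφj : (N:ℝ) ≤ (φ j : ℝ) := by
        exact_mod_cast le_trans hj (hφ.le_apply)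
      calc (1:ℝ)/(φ j + 1) ≤ 1/(N+1) := by
            apply one_div_le_one_div_of_le (by positivity)
            linarith
        _ < δ/2 := hN
    obtain ⟨j, hj1, hj2⟩ := (h1.and h2).exists
    refine (haVol (φ j)).trans (measure_mono ?_)
    apply inter_subset_inter_right
    apply preimage_mono
    apply Icc_subset_Icc
    · have := abs_lt.1 hj1
      linarith [this.1]
    · have := abs_lt.1 hj1
      linarith [this.2]
  -- Step E: the candidate set
  set E : Set (Fin n → ℝ) := Q ∩ f ⁻¹' Icc b (b + r) with hE
  have hEQ : E ⊆ Q := inter_subset_left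
  have hEmeas : MeasurableSet E := hQ.inter (hf measurableSet_Icc)
  have hEvol : c ≤ volume E := by
    set S : ℕ → Set (Fin n → ℝ) := fun m => Q ∩ f ⁻¹' Icc (b - 1/(m+1)) (b + r + 1/(m+1)) with hS
    have hSeq : E = ⋂ m, S m := by
      ext x
      simp only [hE, hS, mem_inter_iff, mem_iInter, mem_preimage, mem_Icc]
      constructor
      · rintro ⟨hxQ, h1, h2⟩ m
        have hm : (0:ℝ) < 1/(m+1) := by positivity
        exact ⟨hxQ, by linarith, by linarith⟩
      · intro h
        refine ⟨(h 0).1, ?_, ?_⟩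
        · by_contra hcon
          push_neg at hcon
          obtain ⟨m, hm⟩ := exists_nat_one_div_lt (show (0:ℝ) < b - f x by linarith)
          linarith [(h m).2.1]
        · by_contra hcon
          push_neg at hcon
          obtain ⟨m, hm⟩ := exists_nat_one_div_lt (show (0:ℝ) < f x - (b + r) by linarith)
          linarith [(h m).2.2]
    have hSmeas : ∀ m, MeasurableSet (S m) := fun m => hQ.inter (hf measurableSet_Icc)
    have hSanti : Antitone S := by
      intro m m' hmm x hx
      refine ⟨hx.1, ?_⟩
      have h1 : (1:ℝ)/(m'+1) ≤ 1/(m+1) := by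
        apply one_div_le_one_div_of_le (by positivity)
        have : (m:ℝ) ≤ m' := by exact_mod_cast hmm
        linarith
      have h2 := hx.2
      simp only [mem_preimage, mem_Icc] at h2 ⊢
      exact ⟨by linarith [h2.1], by linarith [h2.2]⟩
    have hT : Filter.Tendsto (fun m => volume (S m)) Filter.atTop (𝓝 (volume (⋂ m, S m))) :=
      tendsto_measure_iInter_atTop (fun m => (hSmeas m).nullMeasurableSet) hSanti
        ⟨0, ((measure_mono inter_subset_left).trans_lt hQfin).ne⟩
    rw [← hSeq] at hT
    exact ge_of_tendsto' hT (fun m => hD (1/(m+1)) (by positivity))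
  have hEmem : E ∈ {E : Set (Fin n → ℝ) | E ⊆ Q ∧ MeasurableSet E ∧
      ENNReal.ofReal (1 - l) * volume Q ≤ volume E} := ⟨hEQ, hEmeas, hEvol⟩
  refine ⟨E, hEQ, hEmeas, hEvol, le_antisymm ?_ (iInf₂_le E hEmem)⟩
  -- osc f E ≤ ω
  rw [hωr]
  apply iSup₂_le
  intro x hx
  apply iSup₂_le
  intro y hy
  apply ENNReal.ofReal_le_ofReal
  obtain ⟨-, hx1, hx2⟩ := hx
  obtain ⟨-, hy1, hy2⟩ := hy
  simp only [mem_Icc] at *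
  linarith [hx2, hy1]
end
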